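/- arXiv:2407.08812 — 4 statements merged into one kernel-verified Lean document; each statement's English description precedes it below -/
import Mathlib

section
/- Any binary phylogenetic network has a unique fence decomposition, i.e., a unique partition of its arcs other than the root arc into maximal zig-zag trails. -/
open Classical

structure MGraph (V A : Type) where
  tail : A → V
  head : A → V

namespace MGraph

variable {V A : Type} [Fintype V] [Fintype A] [DecidableEq V] [DecidableEq A]

variable (D : MGraph V A)

def indeg (v : V) : ℕ := Fintype.card {a : A // D.head a = v}
def outdeg (v : V) : ℕ := Fintype.card {a : A // D.tail a = v}

def IsRoot (v : V) : Prop := D.indeg v = 0 ∧ D.outdeg v = 1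
def IsLeaf (v : V) : Prop := D.indeg v = 1 ∧ D.outdeg v = 0
def IsTreeNode (v : V) : Prop := D.indeg v = 1 ∧ 2 ≤ D.outdeg v
def IsRetic (v : V) : Prop := 2 ≤ D.indeg v ∧ D.outdeg v = 1

def Acyclic : Prop := ∃ rank : V → ℕ, ∀ a : A, rank (D.tail a) < rank (D.head a)
def NoParallel : Prop := ∀ a b : A, D.tail a = D.tail b → D.head a = D.head b → a = b
def IsRootArc (e : A) : Prop := D.IsRoot (D.tail e)

/-- (non-binary) phylogenetic network -/
def IsPhylo : Prop :=
  D.Acyclic ∧ D.NoParallel ∧ (∃! v : V, D.IsRoot v) ∧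
    ∀ v : V, D.IsRoot v ∨ D.IsLeaf v ∨ D.IsTreeNode v ∨ D.IsRetic v

def IsSemiBinary : Prop := D.IsPhylo ∧ ∀ v : V, D.IsTreeNode v → D.outdeg v = 2
def IsBinary : Prop := D.IsSemiBinary ∧ ∀ v : V, D.IsRetic v → D.indeg v = 2

/-- A support tree: keep all non-reticulation arcs, exactly one incoming arc per
reticulation, and create no new leaves. -/
def IsSupportTree (S : Set A) : Prop :=
  (∀ a : A, ¬ D.IsRetic (D.head a) → a ∈ S) ∧
  (∀ v : V, D.IsRetic v → ∃! a : A, a ∈ S ∧ D.head a = v) ∧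
  (∀ v : V, ¬ D.IsLeaf v → ∃ a ∈ S, D.tail a = v)

def IsTreeBased : Prop := ∃ S : Set A, D.IsSupportTree S

def IsTreeChild : Prop :=
  ∀ v : V, ¬ D.IsLeaf v → ∃ e : A, D.tail e = v ∧ (D.IsTreeNode (D.head e) ∨ D.IsLeaf (D.head e))

/-- A cherry shape: two arcs with common tail and distinct heads. -/
def IsCherryShape (s : Finset A) : Prop :=
  ∃ a b : A, a ≠ b ∧ s = {a, b} ∧ D.tail a = D.tail b ∧ D.head a ≠ D.head b

/-- A reticulated cherry shape with designated middle arc `mid`; node-type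
predicates `tn` (tree node) and `rt` (reticulation) are parameters so that the
definition also applies to the bulged version of a network. -/
def IsRCShapeMid (tn rt : V → Prop) (s : Finset A) (mid : A) : Prop :=
  ∃ bot top : A, bot ≠ mid ∧ bot ≠ top ∧ mid ≠ top ∧ s = {bot, mid, top} ∧
    D.head mid = D.tail bot ∧ D.tail mid = D.tail top ∧ rt (D.tail bot) ∧ tn (D.tail mid)

def IsRCShape (tn rt : V → Prop) (s : Finset A) : Prop := ∃ mid : A, D.IsRCShapeMid tn rt s mid

/-- A cherry cover: every arc except root arcs lies in exactly one shape. -/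
def IsCherryCoverG (tn rt : V → Prop) (isRoot : A → Prop) (P : Finset (Finset A)) : Prop :=
  (∀ s ∈ P, D.IsCherryShape s ∨ D.IsRCShape tn rt s) ∧
  (∀ e : A, ¬ isRoot e → ∃! s : Finset A, s ∈ P ∧ e ∈ s) ∧
  (∀ s ∈ P, ∀ e ∈ s, ¬ isRoot e)

def IsCherryCover (P : Finset (Finset A)) : Prop :=
  D.IsCherryCoverG D.IsTreeNode D.IsRetic D.IsRootArc P

/-- `Q` covers exactly the arc set `T` with cherry and reticulated cherry shapes. -/
def CoversExactly (tn rt : V → Prop) (T : Set A) (Q : Finset (Finset A)) : Prop :=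
  (∀ s ∈ Q, D.IsCherryShape s ∨ D.IsRCShape tn rt s) ∧
  (∀ s ∈ Q, ∀ e ∈ s, e ∈ T) ∧ (∀ e ∈ T, ∃! s : Finset A, s ∈ Q ∧ e ∈ s)

/-- `Q` covers exactly the arc set `T` using only reticulated cherry shapes. -/
def CoversExactlyRC (tn rt : V → Prop) (T : Set A) (Q : Finset (Finset A)) : Prop :=
  (∀ s ∈ Q, D.IsRCShape tn rt s) ∧
  (∀ s ∈ Q, ∀ e ∈ s, e ∈ T) ∧ (∀ e ∈ T, ∃! s : Finset A, s ∈ Q ∧ e ∈ s)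

/-- Multiplicity of an arc in the bulged version. -/
noncomputable def bulgeMult (a : A) : ℕ :=
  if D.IsRetic (D.tail a) then D.indeg (D.tail a) - 1 else 1

/-- Arcs of the bulged version `B(N)`. -/
abbrev BArc : Type := Σ a : A, Fin (D.bulgeMult a)

def Bulged : MGraph V D.BArc := ⟨fun p => D.tail p.1, fun p => D.head p.1⟩

/-- A cherry cover of the bulged version, with node types taken from `N`. -/
def IsBulgedCherryCover (P : Finset (Finset D.BArc)) : Prop :=
  D.Bulged.IsCherryCoverG (fun v => D.IsTreeNode v) (fun v => D.IsRetic v)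
    (fun e => D.IsRootArc e.1) P

/-- Isomorphism class of a bulged cherry cover: forget which parallel copy is used. -/
noncomputable def coverClass (P : Finset (Finset D.BArc)) : Multiset (Finset A) :=
  P.val.map (fun s => s.image (fun e => e.1))

/-- Zig-zag trail: a nonempty sequence of distinct arcs alternately sharing heads
and tails. -/
def IsZZ (l : List A) : Prop :=
  l ≠ [] ∧ l.Nodup ∧
    (((∀ (i : ℕ) (x y : A), l[2*i]? = some x → l[2*i+1]? = some y → D.head x = D.head y) ∧
      (∀ (i : ℕ) (x y : A), l[2*i+1]? = some x → l[2*i+2]? = some y → D.tail x = D.tail y)) ∨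
     ((∀ (i : ℕ) (x y : A), l[2*i]? = some x → l[2*i+1]? = some y → D.tail x = D.tail y) ∧
      (∀ (i : ℕ) (x y : A), l[2*i+1]? = some x → l[2*i+2]? = some y → D.head x = D.head y)))

/-- Maximal zig-zag trail: not properly contained in another zig-zag trail. -/
def IsMaxZZ (l : List A) : Prop := D.IsZZ l ∧ ∀ l' : List A, D.IsZZ l' → l.Sublist l' → l' = l

/-- A fence decomposition, as a partition of the non-root arcs into arc sets of
maximal zig-zag trails. -/
def IsFenceDecomp (P : Set (Set A)) : Prop :=
  (∀ s ∈ P, ∃ l : List A, D.IsMaxZZ l ∧ {e : A | e ∈ l} = s) ∧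
  (∀ s ∈ P, ∀ t ∈ P, s ≠ t → Disjoint s t) ∧
  ⋃₀ P = {e : A | ¬ D.IsRootArc e}

/-- W-fence (binary definition). -/
def IsWFence (l : List A) : Prop :=
  D.IsMaxZZ l ∧ 2 ≤ l.length ∧ Even l.length ∧
  (∀ x, l.head? = some x → D.IsRetic (D.tail x)) ∧
  (∀ y, l.getLast? = some y → D.IsRetic (D.tail y))

/-- A (not necessarily maximal) crown: a closed zig-zag trail of even length ≥ 4. -/
def IsCrownCycle (l : List A) : Prop :=
  D.IsZZ l ∧ 4 ≤ l.length ∧ Even l.length ∧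
  ∀ x y, l.head? = some x → l.getLast? = some y → (D.head x = D.head y ∨ D.tail x = D.tail y)

def IsCrownTrail (l : List A) : Prop := D.IsMaxZZ l ∧ D.IsCrownCycle l

def ContainsCrown (l : List A) : Prop := ∃ m : List A, D.IsCrownCycle m ∧ m.IsInfix l

/-- M-fence: maximal zig-zag trail of even length, not a crown, all tails tree nodes. -/
def IsMFence (l : List A) : Prop :=
  D.IsMaxZZ l ∧ Even l.length ∧ ¬ D.IsCrownTrail l ∧ ∀ e ∈ l, D.IsTreeNode (D.tail e)

/-- W-fence (crown-free version, for non-binary networks). -/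
def IsWFenceNC (l : List A) : Prop :=
  D.IsMaxZZ l ∧ Even l.length ∧ ¬ D.ContainsCrown l ∧
  (∀ x, l.head? = some x → D.IsRetic (D.tail x)) ∧
  (∀ y, l.getLast? = some y → D.IsRetic (D.tail y))

/-- Lower W-crown. -/
def IsLowerWCrown (l : List A) : Prop :=
  D.IsZZ l ∧ ∃ p cr : List A, l = p ++ cr ∧ Odd p.length ∧ ¬ D.ContainsCrown p ∧
    D.IsCrownCycle cr ∧
    (∀ x y, p.getLast? = some x → cr.head? = some y → D.head x = D.head y) ∧
    (∀ x, p.head? = some x → D.IsRetic (D.tail x))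

/-- Double-crown: two crowns joined by a crown-free trail. -/
def IsDoubleCrown (l : List A) : Prop :=
  D.IsZZ l ∧ ∃ p q r : List A, l = p ++ q ++ r ∧ D.IsCrownCycle p ∧ D.IsCrownCycle r ∧
    ¬ D.ContainsCrown q

def ArcsOf (F : Set (List A)) : Set A := {e : A | ∃ l ∈ F, e ∈ l}

def Intersects (l1 l2 : List A) : Prop := ∃ e : A, e ∈ l1 ∧ e ∈ l2

/-- Extended zig-zag trail: a set of maximal zig-zag trails chain-connected by
pairwise intersection. -/
def IsExtZZ (F : Set (List A)) : Prop :=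
  F.Nonempty ∧ (∀ l ∈ F, D.IsMaxZZ l) ∧
  ∀ l1 ∈ F, ∀ l2 ∈ F,
    Relation.ReflTransGen (fun x y : List A => x ∈ F ∧ y ∈ F ∧ Intersects x y) l1 l2

def IsMaxExtZZ (F : Set (List A)) : Prop :=
  D.IsExtZZ F ∧ ∀ G : Set (List A), D.IsExtZZ G → F ⊆ G → G = F

def VertsOf (F : Set (List A)) : Set V :=
  {w : V | ∃ e ∈ ArcsOf F, D.tail e = w ∨ D.head e = w}

/-- The free endpoint of an extremal arc of a trail. -/
noncomputable def frontEnd (x : A) : V := if D.IsRetic (D.tail x) then D.tail x else D.head x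

/-- Endpoints of a zig-zag trail. -/
def EndsSet (l : List A) : Set V :=
  {w : V | (∃ x, l.head? = some x ∧ w = D.frontEnd x) ∨ (∃ y, l.getLast? = some y ∧ w = D.frontEnd y)}

/-- `s` is the arc set of a crown contained in (the arcs of) `F`. -/
def CrownIn (F : Set (List A)) (s : Set A) : Prop :=
  ∃ m : List A, D.IsCrownCycle m ∧ {e : A | e ∈ m} = s ∧ s ⊆ ArcsOf F

/-- Endpoints of an extended zig-zag trail (from its non-crown constituents). -/
def EndSetF (F : Set (List A)) : Set V :=
  {w : V | ∃ l ∈ F, ¬ D.ContainsCrown l ∧ w ∈ D.EndsSet l}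

def NoCrownsIn (F : Set (List A)) : Prop := ¬ ∃ s : Set A, D.CrownIn F s

def IsGenNFence (F : Set (List A)) : Prop :=
  D.IsMaxExtZZ F ∧ D.NoCrownsIn F ∧ ∃! u : V, u ∈ D.EndSetF F ∧ D.IsRetic u

def IsGenMFence (F : Set (List A)) : Prop :=
  D.IsMaxExtZZ F ∧ D.NoCrownsIn F ∧ ∀ w ∈ D.EndSetF F, D.IsTreeNode w

def IsGenCrown (F : Set (List A)) : Prop :=
  D.IsMaxExtZZ F ∧ (∃! s : Set A, D.CrownIn F s) ∧ ∀ w ∈ D.EndSetF F, D.IsTreeNode w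

end MGraph


section ZZAux

open MGraph

variable {V A : Type} [Fintype V] [Fintype A] [DecidableEq V] [DecidableEq A]
variable (D : MGraph V A)

/-- The relation used at a slot of given type: `true` = heads agree, `false` = tails agree. -/
def ZRel (c : Bool) (x y : A) : Prop := if c then D.head x = D.head y else D.tail x = D.tail y

/-- Alternating condition with starting type `b`. -/
def ZAlt (b : Bool) (l : List A) : Prop :=
  ∀ j x y, l[j]? = some x → l[j+1]? = some y → ZRel D (Bool.xor b (decide (j % 2 = 1))) x y

omit [Fintype V] [Fintype A] [DecidableEq V] [DecidableEq A] in
theorem zrel_symm {c : Bool} {x y : A} (h : ZRel D c x y) : ZRel D c y x := by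
  cases c <;> simpa [ZRel] using h.symm

omit [Fintype V] [Fintype A] [DecidableEq V] [DecidableEq A] in
theorem zrel_or {c : Bool} {x y : A} (h : ZRel D c x y) :
    D.head x = D.head y ∨ D.tail x = D.tail y := by
  cases c
  · exact Or.inr (by simpa [ZRel] using h)
  · exact Or.inl (by simpa [ZRel] using h)

theorem parity_flip (j : ℕ) : decide ((j+1) % 2 = 1) = !decide (j % 2 = 1) := by
  rcases Nat.mod_two_eq_zero_or_one j with h | h <;> simp [Nat.add_mod, h]

theorem bool_of_ne {c d : Bool} (h : c ≠ d) : c = !d := by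
  cases c <;> cases d <;> simp_all

theorem bxor_not_not (p q : Bool) : Bool.xor (!p) (!q) = Bool.xor p q := by cases p <;> cases q <;> rfl

theorem bnot_xor (p q : Bool) : (!(Bool.xor p q)) = Bool.xor p (!q) := by cases p <;> cases q <;> rfl

omit [Fintype V] [Fintype A] [DecidableEq V] [DecidableEq A] in
theorem isZZ_iff (l : List A) :
    D.IsZZ l ↔ l ≠ [] ∧ l.Nodup ∧ ∃ b : Bool, ZAlt D b l := by
  constructor
  · rintro ⟨hne, hnd, h | h⟩
    · refine ⟨hne, hnd, true, ?_⟩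
      intro j x y hx hy
      rcases Nat.even_or_odd j with ⟨i, hi⟩ | ⟨i, hi⟩
      · have h2 : j = 2 * i := by omega
        subst h2
        have hm : 2 * i % 2 = 0 := by omega
        have := h.1 i x y hx hy
        simpa [ZRel, hm] using this
      · have h2 : j = 2 * i + 1 := by omega
        subst h2
        have hm : (2 * i + 1) % 2 = 1 := by omega
        have := h.2 i x y hx hy
        simpa [ZRel, hm] using this
    · refine ⟨hne, hnd, false, ?_⟩
      intro j x y hx hy
      rcases Nat.even_or_odd j with ⟨i, hi⟩ | ⟨i, hi⟩
      · have h2 : j = 2 * i := by omega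
        subst h2
        have hm : 2 * i % 2 = 0 := by omega
        have := h.1 i x y hx hy
        simpa [ZRel, hm] using this
      · have h2 : j = 2 * i + 1 := by omega
        subst h2
        have hm : (2 * i + 1) % 2 = 1 := by omega
        have := h.2 i x y hx hy
        simpa [ZRel, hm] using this
  · rintro ⟨hne, hnd, b, hb⟩
    refine ⟨hne, hnd, ?_⟩
    cases b
    · refine Or.inr ⟨?_, ?_⟩
      · intro i x y hx hy
        have hm : 2 * i % 2 = 0 := by omega
        have := hb (2 * i) x y hx hy
        simpa [ZRel, hm] using this
      · intro i x y hx hy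
        have hm : (2 * i + 1) % 2 = 1 := by omega
        have := hb (2 * i + 1) x y hx hy
        simpa [ZRel, hm] using this
    · refine Or.inl ⟨?_, ?_⟩
      · intro i x y hx hy
        have hm : 2 * i % 2 = 0 := by omega
        have := hb (2 * i) x y hx hy
        simpa [ZRel, hm] using this
      · intro i x y hx hy
        have hm : (2 * i + 1) % 2 = 1 := by omega
        have := hb (2 * i + 1) x y hx hy
        simpa [ZRel, hm] using this

omit [Fintype V] [Fintype A] [DecidableEq V] [DecidableEq A] in
theorem zalt_short {b : Bool} {l : List A} (h : l.length ≤ 1) : ZAlt D b l := by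
  intro j x y hx hy
  have : l[j+1]? = none := List.getElem?_eq_none (by omega)
  rw [this] at hy
  exact absurd hy (by simp)

omit [Fintype V] [Fintype A] [DecidableEq V] [DecidableEq A] in
theorem zalt_append {b : Bool} {l : List A} {x g : A}
    (h : ZAlt D b l) (hx : l[l.length - 1]? = some x)
    (hr : ZRel D (Bool.xor b (decide ((l.length - 1) % 2 = 1))) x g) :
    ZAlt D b (l ++ [g]) := by
  have hl : l ≠ [] := by
    intro h0; rw [h0] at hx; exact absurd hx (by simp)
  have hlen : 1 ≤ l.length := by
    cases l with
    | nil => exact absurd rfl hl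
    | cons a t => simp
  intro j x' y' hx' hy'
  by_cases hj : j + 1 < l.length
  · rw [List.getElem?_append_left (by omega)] at hx'
    rw [List.getElem?_append_left hj] at hy'
    exact h j x' y' hx' hy'
  · have hy2 : j + 1 < (l ++ [g]).length := by
      by_contra hc
      rw [List.getElem?_eq_none (by omega)] at hy'
      exact absurd hy' (by simp)
    have hlen2 : (l ++ [g]).length = l.length + 1 := by simp
    have hj1 : j + 1 = l.length := by omega
    have hxx : x' = x := by
      rw [List.getElem?_append_left (by omega)] at hx'
      rw [show j = l.length - 1 by omega, hx] at hx'
      exact (Option.some.inj hx').symm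
    have hyy : y' = g := by
      rw [hj1, List.getElem?_concat_length] at hy'
      exact (Option.some.inj hy').symm
    subst hxx; subst hyy
    rw [show j = l.length - 1 by omega]
    exact hr

omit [Fintype V] [Fintype A] [DecidableEq V] [DecidableEq A] in
theorem zalt_cons {b : Bool} {l : List A} {g x : A}
    (h : ZAlt D b l) (hx : l[0]? = some x) (hr : ZRel D (!b) g x) :
    ZAlt D (!b) (g :: l) := by
  intro j x' y' hx' hy'
  cases j with
  | zero =>
    have hxg : x' = g := by simpa using hx'.symm
    have hyx : y' = x := by
      rw [List.getElem?_cons_succ, hx] at hy'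
      exact (Option.some.inj hy').symm
    subst hxg; subst hyx
    simpa using hr
  | succ k =>
    rw [List.getElem?_cons_succ] at hx' hy'
    have hthis := h k x' y' hx' hy'
    rw [parity_flip k, bxor_not_not]
    exact hthis

theorem card_le_two_unique {α : Type} [Fintype α] [DecidableEq α] (h : Fintype.card α ≤ 2)
    (x y g : α) (hyx : y ≠ x) (hgx : g ≠ x) : y = g := by
  by_contra hgy
  have h3 : ({x, y, g} : Finset α).card = 3 := by
    rw [Finset.card_insert_of_notMem (by simp [Ne.symm hyx, Ne.symm hgx]),
      Finset.card_insert_of_notMem (by simpa using hgy), Finset.card_singleton]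
  have h4 := Finset.card_le_univ ({x, y, g} : Finset α)
  rw [h3] at h4
  omega

omit [Fintype V] [DecidableEq A] in
theorem indeg_le_two (hbin : D.IsBinary) (v : V) : D.indeg v ≤ 2 := by
  obtain ⟨⟨⟨_, _, _, hcls⟩, _⟩, hb⟩ := hbin
  rcases hcls v with h | h | h | h
  · rw [h.1]; omega
  · rw [h.1]; omega
  · rw [h.1]; omega
  · rw [hb v h]

omit [Fintype V] [DecidableEq A] in
theorem outdeg_le_two (hbin : D.IsBinary) (v : V) : D.outdeg v ≤ 2 := by
  obtain ⟨⟨⟨_, _, _, hcls⟩, hsb⟩, _⟩ := hbin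
  rcases hcls v with h | h | h | h
  · rw [h.2]; omega
  · rw [h.2]; omega
  · rw [hsb v h]
  · rw [h.2]; omega

omit [Fintype V] in
theorem zrel_unique (hbin : D.IsBinary) {c : Bool} {x y g : A}
    (h1 : ZRel D c y x) (h2 : ZRel D c g x) (hyx : y ≠ x) (hgx : g ≠ x) : y = g := by
  cases c
  · have hcard : Fintype.card {a : A // D.tail a = D.tail x} ≤ 2 := outdeg_le_two D hbin (D.tail x)
    have := card_le_two_unique hcard (⟨x, rfl⟩ : {a : A // D.tail a = D.tail x})
      ⟨y, by simpa [ZRel] using h1⟩ ⟨g, by simpa [ZRel] using h2⟩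
      (by simpa [Subtype.ext_iff] using hyx) (by simpa [Subtype.ext_iff] using hgx)
    simpa [Subtype.ext_iff] using this
  · have hcard : Fintype.card {a : A // D.head a = D.head x} ≤ 2 := indeg_le_two D hbin (D.head x)
    have := card_le_two_unique hcard (⟨x, rfl⟩ : {a : A // D.head a = D.head x})
      ⟨y, by simpa [ZRel] using h1⟩ ⟨g, by simpa [ZRel] using h2⟩
      (by simpa [Subtype.ext_iff] using hyx) (by simpa [Subtype.ext_iff] using hgx)
    simpa [Subtype.ext_iff] using this

omit [Fintype V] [Fintype A] [DecidableEq V] [DecidableEq A] in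
theorem isZZ_singleton (a : A) : D.IsZZ [a] := by
  rw [isZZ_iff]
  exact ⟨by simp, by simp, true, zalt_short D (by simp)⟩

omit [Fintype V] [Fintype A] [DecidableEq V] [DecidableEq A] in
theorem mem_get_idx {l : List A} {a : A} (h : a ∈ l) : ∃ j, j < l.length ∧ l[j]? = some a := by
  obtain ⟨i, hi, he⟩ := List.mem_iff_getElem.mp h
  exact ⟨i, hi, by rw [List.getElem?_eq_getElem hi, he]⟩

omit [Fintype V] [Fintype A] [DecidableEq V] [DecidableEq A] in
theorem ne_of_idx_ne {l : List A} (hnd : l.Nodup) {i j : ℕ} {x y : A} (hi : i < l.length)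
    (hx : l[i]? = some x) (hy : l[j]? = some y) (hij : i ≠ j) : x ≠ y := by
  intro h
  subst h
  exact hij ((List.getElem?_inj hi hnd).mp (hx.trans hy.symm))

omit [Fintype V] [DecidableEq V] in
theorem exists_maxZZ (a : A) : ∃ l : List A, D.IsMaxZZ l ∧ a ∈ l := by
  have key : ∀ k (l : List A), D.IsZZ l → a ∈ l → Fintype.card A ≤ l.length + k →
      ∃ m, D.IsMaxZZ m ∧ a ∈ m := by
    intro k
    induction k with
    | zero =>
      intro l hl ha hle
      refine ⟨l, ⟨hl, ?_⟩, ha⟩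
      intro l' hl' hsub
      by_contra hne
      have h1 : l.length < l'.length :=
        lt_of_le_of_ne hsub.length_le (fun h => hne (hsub.eq_of_length h).symm)
      have h2 : l'.length ≤ Fintype.card A := ((isZZ_iff D l').mp hl').2.1.length_le_card
      omega
    | succ k ih =>
      intro l hl ha hle
      by_cases hmax : ∀ l', D.IsZZ l' → l.Sublist l' → l' = l
      · exact ⟨l, ⟨hl, hmax⟩, ha⟩
      · push_neg at hmax
        obtain ⟨l', hl', hsub, hne⟩ := hmax
        have h1 : l.length < l'.length :=
          lt_of_le_of_ne hsub.length_le (fun h => hne (hsub.eq_of_length h).symm)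
        exact ih l' hl' (hsub.mem ha) (by omega)
  exact key (Fintype.card A) [a] (isZZ_singleton D a) (by simp) (by simp)

omit [Fintype V] in
theorem zz_closure (hbin : D.IsBinary) {l : List A} (hl : D.IsMaxZZ l) {x g : A}
    (hx : x ∈ l) (hgx : g ≠ x) (hrel : D.head g = D.head x ∨ D.tail g = D.tail x) :
    g ∈ l := by
  by_contra hg
  obtain ⟨hzz, hmax⟩ := hl
  rw [isZZ_iff] at hzz
  obtain ⟨hne, hnd, b, halt⟩ := hzz
  obtain ⟨j, hj, hjx⟩ := mem_get_idx hx
  obtain ⟨cg, hcg⟩ : ∃ c, ZRel D c g x := by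
    rcases hrel with h | h
    · exact ⟨true, by simpa [ZRel] using h⟩
    · exact ⟨false, by simpa [ZRel] using h⟩
  have succ_case : j + 1 < l.length → cg = Bool.xor b (decide (j % 2 = 1)) → False := by
    intro hjs heq
    have hy : l[j+1]? = some (l[j+1]'hjs) := List.getElem?_eq_getElem hjs
    have hrel2 : ZRel D (Bool.xor b (decide (j % 2 = 1))) x (l[j+1]'hjs) := halt j x _ hjx hy
    have hyx : l[j+1]'hjs ≠ x := ne_of_idx_ne hnd hjs hy hjx (by omega)
    have heq2 : l[j+1]'hjs = g :=
      zrel_unique D hbin (zrel_symm D hrel2) (by rw [← heq] at hrel2 ⊢; exact hcg) hyx hgx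
    exact hg (heq2 ▸ List.getElem_mem hjs)
  have pred_case : 1 ≤ j → cg = Bool.xor b (decide ((j-1) % 2 = 1)) → False := by
    intro hjs heq
    have hjlt : j - 1 < l.length := by omega
    have hy : l[j-1]? = some (l[j-1]'hjlt) := List.getElem?_eq_getElem hjlt
    have hrel2 : ZRel D (Bool.xor b (decide ((j-1) % 2 = 1))) (l[j-1]'hjlt) x := by
      have := halt (j-1) _ x hy (by rw [show j - 1 + 1 = j by omega]; exact hjx)
      exact this
    have hyx : l[j-1]'hjlt ≠ x := ne_of_idx_ne hnd hjlt hy hjx (by omega)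
    have heq2 : l[j-1]'hjlt = g :=
      zrel_unique D hbin hrel2 (by rw [heq] at hcg; exact hcg) hyx hgx
    exact hg (heq2 ▸ List.getElem_mem hjlt)
  have hflip : 1 ≤ j → decide (j % 2 = 1) = !decide ((j-1) % 2 = 1) := by
    intro hjs
    have := parity_flip (j - 1)
    rwa [show j - 1 + 1 = j by omega] at this
  by_cases h1 : j + 1 < l.length
  · by_cases h2 : cg = Bool.xor b (decide (j % 2 = 1))
    · exact succ_case h1 h2
    · by_cases h3 : 1 ≤ j
      · refine pred_case h3 ?_
        rw [bool_of_ne h2, hflip h3, bnot_xor, Bool.not_not]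
      · have hj0 : j = 0 := by omega
        subst hj0
        have hcgb : cg = !b := by
          have := bool_of_ne h2
          simpa using this
        have halt2 : ZAlt D (!b) (g :: l) :=
          zalt_cons D halt hjx (by rw [← hcgb]; exact hcg)
        have hzz2 : D.IsZZ (g :: l) := by
          rw [isZZ_iff]
          exact ⟨by simp, by simp [hnd, hg], !b, halt2⟩
        have heq := hmax (g :: l) hzz2 (List.sublist_cons_self g l)
        have : l.length = (g :: l).length := by rw [heq]
        simp at this
  · by_cases h3 : 1 ≤ j
    · by_cases h2 : cg = Bool.xor b (decide ((j-1) % 2 = 1))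
      · exact pred_case h3 h2
      · have hcgb : cg = Bool.xor b (decide (j % 2 = 1)) := by
          rw [bool_of_ne h2, hflip h3, bnot_xor]
        have hjl : j = l.length - 1 := by omega
        have halt2 : ZAlt D b (l ++ [g]) := by
          refine zalt_append D (x := x) (g := g) halt (by rw [← hjl]; exact hjx) ?_
          rw [← hjl, ← hcgb]
          exact zrel_symm D hcg
        have hzz2 : D.IsZZ (l ++ [g]) := by
          rw [isZZ_iff]
          refine ⟨by simp, ?_, b, halt2⟩
          rw [List.nodup_append]
          exact ⟨hnd, by simp, by simpa using (show ∀ a ∈ l, ¬a = g by rintro a ha rfl; exact hg ha)⟩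
        have heq := hmax (l ++ [g]) hzz2 (List.sublist_append_left l [g])
        have : (l ++ [g]).length = l.length := by rw [heq]
        simp at this
    · have hj0 : j = 0 := by omega
      subst hj0
      have hlen1 : l.length = 1 := by omega
      have halt0 : ZAlt D cg l := zalt_short D (by omega)
      have halt2 : ZAlt D cg (l ++ [g]) := by
        refine zalt_append D (x := x) (g := g) halt0 ?_ ?_
        · rw [hlen1]; simpa using hjx
        · rw [hlen1]
          simpa using zrel_symm D hcg
      have hzz2 : D.IsZZ (l ++ [g]) := by
        rw [isZZ_iff]
        refine ⟨by simp, ?_, cg, halt2⟩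
        rw [List.nodup_append]
        exact ⟨hnd, by simp, by simpa using (show ∀ a ∈ l, ¬a = g by rintro a ha rfl; exact hg ha)⟩
      have heq := hmax (l ++ [g]) hzz2 (List.sublist_append_left l [g])
      have : (l ++ [g]).length = l.length := by rw [heq]
      simp at this

omit [Fintype V] in
theorem zz_subset (hbin : D.IsBinary) {l1 l2 : List A} (h1 : D.IsMaxZZ l1) (h2 : D.IsZZ l2)
    {e : A} (he1 : e ∈ l1) (he2 : e ∈ l2) : ∀ x ∈ l2, x ∈ l1 := by
  rw [isZZ_iff] at h2
  obtain ⟨hne, hnd, b, halt⟩ := h2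
  obtain ⟨j0, hj0, hj0e⟩ := mem_get_idx he2
  have step : ∀ j x y, l2[j]? = some x → l2[j+1]? = some y →
      (x ∈ l1 → y ∈ l1) ∧ (y ∈ l1 → x ∈ l1) := by
    intro j x y hx hy
    have hr := halt j x y hx hy
    have hxl : j < l2.length := by
      by_contra hc
      rw [List.getElem?_eq_none (by omega)] at hx
      exact absurd hx (by simp)
    have hxy : x ≠ y := ne_of_idx_ne hnd hxl hx hy (by omega)
    have hor := zrel_or D hr
    constructor
    · intro hxm
      refine zz_closure D hbin h1 hxm hxy.symm ?_
      rcases hor with h | h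
      · exact Or.inl h.symm
      · exact Or.inr h.symm
    · intro hym
      exact zz_closure D hbin h1 hym hxy hor
  have up : ∀ d x, l2[j0 + d]? = some x → x ∈ l1 := by
    intro d
    induction d with
    | zero =>
      intro x hx
      rw [Nat.add_zero, hj0e] at hx
      rw [← Option.some.inj hx]
      exact he1
    | succ d ih =>
      intro x hx
      have hlt : j0 + d < l2.length := by
        by_contra hc
        rw [show j0 + (d+1) = (j0 + d) + 1 by omega] at hx
        rw [List.getElem?_eq_none (by omega)] at hx
        exact absurd hx (by simp)
      have hy : l2[j0 + d]? = some (l2[j0+d]'hlt) := List.getElem?_eq_getElem hlt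
      exact (step (j0 + d) _ x hy (by rw [show j0 + d + 1 = j0 + (d+1) by omega]; exact hx)).1
        (ih _ hy)
  have down : ∀ d x, l2[j0 - d]? = some x → x ∈ l1 := by
    intro d
    induction d with
    | zero =>
      intro x hx
      rw [Nat.sub_zero, hj0e] at hx
      rw [← Option.some.inj hx]
      exact he1
    | succ d ih =>
      intro x hx
      by_cases hc : j0 ≤ d
      · rw [show j0 - (d+1) = j0 - d by omega] at hx
        exact ih x hx
      · have hlt : j0 - d < l2.length := by omega
        have hy : l2[j0 - d]? = some (l2[j0-d]'hlt) := List.getElem?_eq_getElem hlt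
        refine (step (j0 - (d+1)) x _ hx ?_).2 (ih _ hy)
        rw [show j0 - (d+1) + 1 = j0 - d by omega]
        exact hy
  intro x hx
  obtain ⟨j, hj, hje⟩ := mem_get_idx hx
  by_cases hc : j0 ≤ j
  · exact up (j - j0) x (by rw [show j0 + (j - j0) = j by omega]; exact hje)
  · exact down (j0 - j) x (by rw [show j0 - (j0 - j) = j by omega]; exact hje)

omit [Fintype V] in
theorem maxzz_set_eq (hbin : D.IsBinary) {l1 l2 : List A} (h1 : D.IsMaxZZ l1) (h2 : D.IsMaxZZ l2)
    {e : A} (he1 : e ∈ l1) (he2 : e ∈ l2) : {x : A | x ∈ l1} = {x : A | x ∈ l2} := by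
  ext x
  exact ⟨fun hx => zz_subset D hbin h2 h1.1 he2 he1 x hx,
    fun hx => zz_subset D hbin h1 h2.1 he1 he2 x hx⟩

theorem rootarc_isolated (hbin : D.IsBinary) {r : A} (hr : D.IsRootArc r) :
    ∀ y : A, (D.head y = D.head r ∨ D.tail y = D.tail r) → y = r := by
  have hroot := hr
  obtain ⟨⟨⟨hacy, hnp, hexu, hcls⟩, hsb⟩, hb⟩ := hbin
  have htail : ∀ y : A, D.tail y = D.tail r → y = r := by
    intro y hy
    have hcard : Fintype.card {a : A // D.tail a = D.tail r} = 1 := hroot.2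
    have := Fintype.card_le_one_iff.mp (le_of_eq hcard)
      (⟨y, hy⟩ : {a : A // D.tail a = D.tail r}) ⟨r, rfl⟩
    simpa [Subtype.ext_iff] using this
  have hhead_ne_root : ¬ D.IsRoot (D.head r) := by
    intro h0
    have hpos : 0 < D.indeg (D.head r) := Fintype.card_pos_iff.mpr ⟨⟨r, rfl⟩⟩
    rw [h0.1] at hpos
    omega
  have hhead_not_retic : ¬ D.IsRetic (D.head r) := by
    intro hret
    obtain ⟨rank, hrank⟩ := hacy
    have claim : ∀ n, ∀ v : V, rank v ≤ n → ¬ D.IsRoot v → rank (D.head r) ≤ rank v := by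
      intro n
      induction n with
      | zero =>
        intro v hv hnr
        have hind : 0 < D.indeg v := by
          rcases hcls v with h | h | h | h
          · exact absurd h hnr
          · rw [h.1]; omega
          · rw [h.1]; omega
          · have := h.1; omega
        obtain ⟨⟨a, ha⟩⟩ := Fintype.card_pos_iff.mp hind
        have := hrank a
        rw [ha] at this
        omega
      | succ n ih =>
        intro v hv hnr
        have hind : 0 < D.indeg v := by
          rcases hcls v with h | h | h | h
          · exact absurd h hnr
          · rw [h.1]; omega
          · rw [h.1]; omega
          · have := h.1; omega
        obtain ⟨⟨a, ha⟩⟩ := Fintype.card_pos_iff.mp hind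
        have hlt : rank (D.tail a) < rank v := by
          have := hrank a
          rwa [ha] at this
        by_cases hu : D.IsRoot (D.tail a)
        · have heq : D.tail a = D.tail r := hexu.unique hu hroot
          have har : a = r := htail a heq
          rw [← ha, har]
        · have := ih (D.tail a) (by omega) hu
          omega
    have h2 : 2 ≤ D.indeg (D.head r) := hret.1
    have hb2 : ∃ b : A, b ≠ r ∧ D.head b = D.head r := by
      have hcard : 1 < Fintype.card {a : A // D.head a = D.head r} := h2
      obtain ⟨b, hb'⟩ := Fintype.exists_ne_of_one_lt_card hcard ⟨r, rfl⟩
      exact ⟨b.1, by simpa [Subtype.ext_iff] using hb', b.2⟩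
    obtain ⟨b, hbr, hbh⟩ := hb2
    have hpnr : ¬ D.IsRoot (D.tail b) := by
      intro h0
      have : D.tail b = D.tail r := hexu.unique h0 hroot
      exact hbr (htail b this)
    have hle := claim (rank (D.tail b)) (D.tail b) le_rfl hpnr
    have hlt := hrank b
    rw [hbh] at hlt
    omega
  have hheadcard : D.indeg (D.head r) = 1 := by
    rcases hcls (D.head r) with h | h | h | h
    · exact absurd h hhead_ne_root
    · exact h.1
    · exact h.1
    · exact absurd h hhead_not_retic
  intro y hy
  rcases hy with hy | hy
  · have := Fintype.card_le_one_iff.mp (le_of_eq hheadcard)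
      (⟨y, hy⟩ : {a : A // D.head a = D.head r}) ⟨r, rfl⟩
    simpa [Subtype.ext_iff] using this
  · exact htail y hy

theorem rootarc_alone (hbin : D.IsBinary) {l : List A} (hzz : D.IsZZ l) {f : A}
    (hf : f ∈ l) (hroot : D.IsRootArc f) : l = [f] := by
  rw [isZZ_iff] at hzz
  obtain ⟨hne, hnd, b, halt⟩ := hzz
  obtain ⟨j, hj, hjf⟩ := mem_get_idx hf
  have hiso := rootarc_isolated D hbin hroot
  have hlen1 : l.length = 1 := by
    by_contra hc
    have hlen2 : 2 ≤ l.length := by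
      cases l with
      | nil => exact absurd rfl hne
      | cons a t =>
        simp only [List.length_cons] at hc ⊢
        omega
    by_cases h1 : j + 1 < l.length
    · have hy : l[j+1]? = some (l[j+1]'h1) := List.getElem?_eq_getElem h1
      have hr := halt j f _ hjf hy
      have hyf : l[j+1]'h1 ≠ f := ne_of_idx_ne hnd h1 hy hjf (by omega)
      refine hyf (hiso _ ?_)
      rcases zrel_or D hr with h | h
      · exact Or.inl h.symm
      · exact Or.inr h.symm
    · have h3 : 1 ≤ j := by omega
      have hlt : j - 1 < l.length := by omega
      have hy : l[j-1]? = some (l[j-1]'hlt) := List.getElem?_eq_getElem hlt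
      have hr := halt (j-1) _ f hy (by rw [show j - 1 + 1 = j by omega]; exact hjf)
      have hyf : l[j-1]'hlt ≠ f := ne_of_idx_ne hnd hlt hy hjf (by omega)
      exact hyf (hiso _ (zrel_or D hr))
  cases l with
  | nil => exact absurd rfl hne
  | cons a t =>
    have ht : t = [] := by
      simp only [List.length_cons] at hlen1
      exact List.length_eq_zero_iff.mp (by omega)
    subst ht
    have hj0 : j = 0 := by simp at hj; exact hj
    subst hj0
    simp at hjf
    rw [hjf]

end ZZAux


/-- Any binary network has a unique fence decomposition. -/
theorem stmt3 {V A : Type} [Fintype V] [Fintype A] [DecidableEq V] [DecidableEq A]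
    (D : MGraph V A) (hbin : D.IsBinary) :
    ∃! P : Set (Set A), D.IsFenceDecomp P := by
  classical
  refine ⟨{s : Set A | ∃ l : List A, D.IsMaxZZ l ∧ {e : A | e ∈ l} = s ∧ ∀ e ∈ s, ¬ D.IsRootArc e},
    ⟨?_, ?_, ?_⟩, ?_⟩
  · rintro s ⟨l, hl, hset, -⟩
    exact ⟨l, hl, hset⟩
  · rintro s ⟨l1, hl1, hs1, -⟩ t ⟨l2, hl2, hs2, -⟩ hst
    rw [Set.disjoint_left]
    intro e hes het
    have he1 : e ∈ l1 := by rw [← hs1] at hes; exact hes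
    have he2 : e ∈ l2 := by rw [← hs2] at het; exact het
    exact hst (by rw [← hs1, ← hs2, maxzz_set_eq D hbin hl1 hl2 he1 he2])
  · ext e
    constructor
    · rintro ⟨s, ⟨l, hl, hset, hnr⟩, hes⟩
      exact hnr e hes
    · intro he
      obtain ⟨l, hl, hel⟩ := exists_maxZZ D e
      refine ⟨{x : A | x ∈ l}, ⟨l, hl, rfl, ?_⟩, hel⟩
      intro f hf hrf
      have : l = [f] := rootarc_alone D hbin hl.1 hf hrf
      rw [this] at hel
      simp at hel
      exact he (hel ▸ hrf)
  · intro P hP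
    obtain ⟨hP1, hP2, hP3⟩ := hP
    ext s
    constructor
    · intro hs
      obtain ⟨l, hl, hset⟩ := hP1 s hs
      refine ⟨l, hl, hset, ?_⟩
      intro e hes
      have : e ∈ ⋃₀ P := ⟨s, hs, hes⟩
      rw [hP3] at this
      exact this
    · rintro ⟨l, hl, hset, hnr⟩
      have hlne : l ≠ [] := hl.1.1
      obtain ⟨e, hel⟩ := List.exists_mem_of_ne_nil l hlne
      have hes : e ∈ s := by rw [← hset]; exact hel
      have : e ∈ ⋃₀ P := by rw [hP3]; exact hnr e hes
      obtain ⟨t, htP, het⟩ := this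
      obtain ⟨l2, hl2, hset2⟩ := hP1 t htP
      have he2 : e ∈ l2 := by rw [← hset2] at het; exact het
      have : s = t := by rw [← hset, ← hset2, maxzz_set_eq D hbin hl hl2 hel he2]
      rw [this]
      exact htP
end

section
/- A binary phylogenetic network is tree-based if and only if its fence decomposition contains no W-fence. -/
open Classical

section ZZAuxSec
set_option linter.unusedSectionVars false

namespace ZZAux

variable {A : Type} [DecidableEq A]

structure Sys (A : Type) where
  R : Finset A
  sg : A → A
  tu : A → Option A
  hsgR : ∀ a ∈ R, sg a ∈ R
  hsgsg : ∀ a ∈ R, sg (sg a) = a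
  hsgne : ∀ a ∈ R, sg a ≠ a
  htuR : ∀ a ∈ R, ∀ b, tu a = some b → b ∈ R
  htutu : ∀ a ∈ R, ∀ b, tu a = some b → tu b = some a
  htune : ∀ a ∈ R, tu a ≠ some a

def IsCh (S : Sys A) (n : ℕ) (d : ℕ → A) : Prop :=
  ∀ i, i + 1 < n → S.tu (S.sg (d i)) = some (d (i + 1))

theorem chain_mem {S : Sys A} {n : ℕ} {d : ℕ → A} (h0 : d 0 ∈ S.R)
    (hc : IsCh S n d) : ∀ i, i < n → d i ∈ S.R := by
  intro i
  induction i with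
  | zero => intro _; exact h0
  | succ j ih =>
    intro hj
    have hjR : d j ∈ S.R := ih (by omega)
    exact S.htuR _ (S.hsgR _ hjR) _ (hc j hj)

theorem palin (S : Sys A) : ∀ n, ∀ d : ℕ → A, 0 < n → d 0 ∈ S.R → IsCh S n d →
    S.sg (d (n - 1)) ≠ d 0 := by
  intro n
  induction n using Nat.strong_induction_on with
  | _ n IH =>
    intro d hn h0 hc heq
    have mem : ∀ i, i < n → d i ∈ S.R := chain_mem h0 hc
    match n, hn with
    | 1, _ => exact S.hsgne _ h0 heq
    | 2, _ =>
      have step0 : S.tu (S.sg (d 0)) = some (d 1) := hc 0 (by omega)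
      have h1 : d 1 ∈ S.R := mem 1 (by omega)
      have : S.sg (d 0) = d 1 := by
        have := congrArg S.sg heq
        rwa [S.hsgsg _ h1, eq_comm] at this
      rw [this] at step0
      exact S.htune _ h1 step0
    | (m+3), _ =>
      set n := m + 3 with hn3
      have hend : d (n-1) ∈ S.R := mem _ (by omega)
      have hgs : S.sg (d 0) = d (n-1) := by
        have := congrArg S.sg heq
        rwa [S.hsgsg _ hend, eq_comm] at this
      have step0 : S.tu (d (n-1)) = some (d 1) := by
        have := hc 0 (by omega); rwa [hgs] at this
      have stepl : S.tu (S.sg (d (n-2))) = some (d (n-1)) := by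
        have := hc (n-2) (by omega)
        have h2 : n - 2 + 1 = n - 1 := by omega
        rwa [h2] at this
      have hsgmem : S.sg (d (n-2)) ∈ S.R := S.hsgR _ (mem _ (by omega))
      have step0' : S.tu (d (n-1)) = some (S.sg (d (n-2))) :=
        S.htutu _ hsgmem _ stepl
      have key : S.sg (d (n-2)) = d 1 := by
        rw [step0] at step0'; exact (Option.some.inj step0').symm
      have hch' : IsCh S (n-2) (fun i => d (i+1)) := by
        intro i hi
        exact hc (i+1) (by omega)
      have := IH (n-2) (by omega) (fun i => d (i+1)) (by omega) (mem 1 (by omega)) hch'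
      apply this
      show S.sg (d (n - 2 - 1 + 1)) = d 1
      have : n - 2 - 1 + 1 = n - 2 := by omega
      rw [this]; exact key

def Bad (S : Sys A) (U : Finset A) : Prop :=
  ∃ n, ∃ d : ℕ → A, 0 < n ∧ IsCh S n d ∧ d 0 ∈ U ∧ S.sg (d (n - 1)) ∈ U

theorem sat : ∀ (N : ℕ) (S : Sys A) (U : Finset A), S.R.card ≤ N → U ⊆ S.R →
    (∀ a ∈ U, S.tu a = none) → ¬ Bad S U →
    ∃ C : Finset A, C ⊆ S.R ∧ U ⊆ C ∧ (∀ a ∈ S.R, (a ∈ C ↔ S.sg a ∉ C)) ∧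
      (∀ a ∈ S.R, ∀ b, S.tu a = some b → (a ∈ C ∨ b ∈ C)) := by
  intro N
  induction N with
  | zero =>
    intro S U hcard hUR _ _
    refine ⟨∅, by simp, ?_, ?_, ?_⟩
    · intro a ha
      have := hUR ha
      simp [Finset.card_eq_zero.mp (Nat.le_zero.mp hcard)] at this
    · intro a ha; rw [Finset.card_eq_zero.mp (Nat.le_zero.mp hcard)] at ha; simp at ha
    · intro a ha; rw [Finset.card_eq_zero.mp (Nat.le_zero.mp hcard)] at ha; simp at ha
  | succ N IH =>
    intro S U hcard hUR hUtu hbad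
    by_cases hR : S.R = ∅
    · refine ⟨∅, by simp, ?_, ?_, ?_⟩
      · intro a ha; have := hUR ha; simp [hR] at this
      · intro a ha; rw [hR] at ha; simp at ha
      · intro a ha; rw [hR] at ha; simp at ha
    have hRne : S.R.Nonempty := Finset.nonempty_iff_ne_empty.mpr hR
    -- pick u
    obtain ⟨u, huR, hu_unit⟩ : ∃ u, u ∈ S.R ∧ (U.Nonempty → u ∈ U) := by
      by_cases hU : U.Nonempty
      · exact ⟨hU.choose, hUR hU.choose_spec, fun _ => hU.choose_spec⟩
      · exact ⟨hRne.choose, hRne.choose_spec, fun h => absurd h hU⟩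
    have hUne_of_mem : ∀ a ∈ U, U.Nonempty := fun a ha => ⟨a, ha⟩
    obtain ⟨v, hv_def⟩ : ∃ v, v = S.sg u := ⟨_, rfl⟩
    have hvR : v ∈ S.R := hv_def ▸ S.hsgR _ huR
    have hvu : v ≠ u := hv_def ▸ S.hsgne _ huR
    have hsgu : S.sg u = v := hv_def.symm
    have hsgv : S.sg v = u := by rw [hv_def]; exact S.hsgsg _ huR
    have hvU : v ∉ U := by
      intro hvmem
      apply hbad
      have hUne : U.Nonempty := ⟨v, hvmem⟩
      refine ⟨1, fun _ => u, Nat.one_pos, ?_, hu_unit hUne, ?_⟩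
      · intro i hi
        exact absurd hi (by omega)
      · show S.sg u ∈ U
        rw [hsgu]; exact hvmem
    -- reduced system
    obtain ⟨R', hR'_def⟩ : ∃ R' : Finset A, R' = S.R \ ({u, v} : Finset A) := ⟨_, rfl⟩
    have hmemR' : ∀ a, a ∈ R' ↔ a ∈ S.R ∧ a ≠ u ∧ a ≠ v := by
      intro a
      rw [hR'_def, Finset.mem_sdiff]
      simp only [Finset.mem_insert, Finset.mem_singleton]
      tauto
    have hsgR' : ∀ a ∈ R', S.sg a ∈ R' := by
      intro a ha
      rw [hmemR'] at ha ⊢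
      obtain ⟨haR, hau, hav⟩ := ha
      refine ⟨S.hsgR _ haR, ?_, ?_⟩
      · intro h; apply hav
        have h2 := congrArg S.sg h
        rw [S.hsgsg _ haR] at h2
        rw [h2, hv_def]
      · intro h; apply hau
        have h2 := congrArg S.sg h
        rw [S.hsgsg _ haR] at h2
        rw [h2, hsgv]
    obtain ⟨tu', htu'_def⟩ : ∃ tu' : A → Option A,
        tu' = fun a => (S.tu a).bind (fun b => if b = u ∨ b = v then none else some b) :=
      ⟨_, rfl⟩
    have htu'_some : ∀ a b, tu' a = some b → S.tu a = some b ∧ b ≠ u ∧ b ≠ v := by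
      intro a b h
      rw [htu'_def] at h
      simp only at h
      rcases hab : S.tu a with _ | c
      · rw [hab] at h; simp at h
      · rw [hab] at h
        by_cases hc : c = u ∨ c = v
        · rw [Option.bind_some, if_pos hc] at h; simp at h
        · rw [Option.bind_some, if_neg hc, Option.some.injEq] at h
          subst h
          exact ⟨rfl, fun hh => hc (Or.inl hh), fun hh => hc (Or.inr hh)⟩
    have htu'_eq : ∀ a b, S.tu a = some b → b ≠ u → b ≠ v → tu' a = some b := by
      intro a b h hbu hbv
      rw [htu'_def]; simp only [h, Option.bind_some]
      simp [hbu, hbv]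
    have htu'_none : ∀ a, S.tu a = none → tu' a = none := by
      intro a h; rw [htu'_def]; simp only [h, Option.bind_none]
    obtain ⟨S', hS'R, hS'sg, hS'tu⟩ : ∃ S' : Sys A, S'.R = R' ∧ S'.sg = S.sg ∧ S'.tu = tu' := by
      refine ⟨⟨R', S.sg, tu', hsgR', ?_, ?_, ?_, ?_, ?_⟩, rfl, rfl, rfl⟩
      · exact fun a ha => S.hsgsg a ((hmemR' a).mp ha).1
      · exact fun a ha => S.hsgne a ((hmemR' a).mp ha).1
      · intro a ha b hb
        obtain ⟨h1, h2, h3⟩ := htu'_some a b hb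
        rw [hmemR'] at ha ⊢
        exact ⟨S.htuR _ ha.1 _ h1, h2, h3⟩
      · intro a ha b hb
        obtain ⟨h1, _, _⟩ := htu'_some a b hb
        rw [hmemR'] at ha
        exact htu'_eq _ _ (S.htutu _ ha.1 _ h1) ha.2.1 ha.2.2
      · intro a ha h
        obtain ⟨h1, _, _⟩ := htu'_some a a h
        exact S.htune _ ((hmemR' a).mp ha).1 h1
    -- new unit set W
    obtain ⟨W, hW_spec, hW_mem⟩ : ∃ W : Finset A, (∀ w ∈ W, S.tu v = some w ∧ w ≠ u) ∧
        (∀ w, S.tu v = some w → w ≠ u → w ∈ W) := by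
      by_cases h : ∃ w, S.tu v = some w ∧ w ≠ u
      · obtain ⟨w, hw1, hw2⟩ := h
        refine ⟨{w}, ?_, ?_⟩
        · intro w' hw'; rw [Finset.mem_singleton] at hw'; subst hw'; exact ⟨hw1, hw2⟩
        · intro w' h1 h2; rw [Finset.mem_singleton]
          rw [hw1] at h1; exact (Option.some.inj h1).symm
      · exact ⟨∅, by simp, fun w h1 h2 => absurd ⟨w, h1, h2⟩ h⟩
    obtain ⟨U', hU'_def⟩ : ∃ U' : Finset A, U' = (U \ ({u, v} : Finset A)) ∪ W := ⟨_, rfl⟩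
    have hmemU' : ∀ a, a ∈ U' ↔ ((a ∈ U ∧ a ≠ u ∧ a ≠ v) ∨ a ∈ W) := by
      intro a
      rw [hU'_def, Finset.mem_union, Finset.mem_sdiff]
      simp only [Finset.mem_insert, Finset.mem_singleton]
      tauto
    have hU'R' : U' ⊆ R' := by
      intro a ha
      rw [hmemU'] at ha
      rcases ha with ⟨h1, h2, h3⟩ | ha
      · rw [hmemR']; exact ⟨hUR h1, h2, h3⟩
      · obtain ⟨hw1, hw2⟩ := hW_spec _ ha
        rw [hmemR']
        refine ⟨S.htuR _ hvR _ hw1, hw2, ?_⟩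
        intro h; subst h; exact S.htune _ hvR hw1
    have hU'tu : ∀ a ∈ U', tu' a = none := by
      intro a ha
      rw [hmemU'] at ha
      rcases ha with ⟨h1, _, _⟩ | ha
      · exact htu'_none _ (hUtu _ h1)
      · obtain ⟨hw1, _⟩ := hW_spec _ ha
        have h2 : S.tu a = some v := S.htutu _ hvR _ hw1
        rw [htu'_def]; simp only [h2, Option.bind_some]
        simp
    -- no bad chain in reduced system
    have hbad' : ¬ Bad S' U' := by
      rintro ⟨n, d, hn, hc, h0, hl⟩
      rw [hS'sg] at hl
      have hcS : IsCh S n d := by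
        intro i hi
        have := hc i hi
        rw [hS'sg, hS'tu] at this
        exact (htu'_some _ _ this).1
      have h0R : d 0 ∈ S.R := ((hmemR' _).mp (hS'R ▸ hU'R' h0)).1
      rw [hmemU'] at h0 hl
      have memd : ∀ i, i < n → d i ∈ S.R := chain_mem h0R hcS
      rcases h0 with h0 | h0 <;> rcases hl with hl | hl
      · exact hbad ⟨n, d, hn, hcS, h0.1, hl.1⟩
      · -- end is new unit w : append v, end becomes u
        obtain ⟨hw1, hw2⟩ := hW_spec _ hl
        have hUne : U.Nonempty := hUne_of_mem _ h0.1
        have htuw : S.tu (S.sg (d (n-1))) = some v := S.htutu _ hvR _ hw1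
        have hc2 : IsCh S (n+1) (fun i => if i < n then d i else v) := by
          intro i hi
          show S.tu (S.sg (if i < n then d i else v)) = some (if i + 1 < n then d (i+1) else v)
          by_cases h : i + 1 < n
          · rw [if_pos (by omega : i < n), if_pos h]
            exact hcS i h
          · have hieq : i = n - 1 := by omega
            subst hieq
            rw [if_pos (by omega : n - 1 < n), if_neg (by omega : ¬ (n - 1 + 1 < n))]
            exact htuw
        apply hbad
        refine ⟨n+1, _, by omega, hc2, ?_, ?_⟩
        · show (if 0 < n then d 0 else v) ∈ U
          rw [if_pos hn]
          exact h0.1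
        · show S.sg (if n + 1 - 1 < n then d (n + 1 - 1) else v) ∈ U
          rw [if_neg (by omega)]
          rw [hsgv]
          exact hu_unit hUne
      · -- start is new unit w : prepend u
        obtain ⟨hw1, hw2⟩ := hW_spec _ h0
        have hUne : U.Nonempty := hUne_of_mem _ hl.1
        have hc2 : IsCh S (n+1) (fun i => if i = 0 then u else d (i - 1)) := by
          intro i hi
          rcases i with _ | j
          · show S.tu (S.sg (if (0:ℕ) = 0 then u else d (0-1))) = some (if (1:ℕ) = 0 then u else d (1-1))
            rw [if_pos rfl, if_neg (by omega)]
            show S.tu (S.sg u) = some (d 0)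
            rw [hsgu]
            exact hw1
          · show S.tu (S.sg (if j + 1 = 0 then u else d (j+1-1))) =
              some (if j + 1 + 1 = 0 then u else d (j+1+1-1))
            rw [if_neg (by omega), if_neg (by omega)]
            have e1 : j + 1 - 1 = j := by omega
            have e2 : j + 1 + 1 - 1 = j + 1 := by omega
            rw [e1, e2]
            exact hcS j (by omega)
        apply hbad
        refine ⟨n+1, _, by omega, hc2, ?_, ?_⟩
        · show (if (0:ℕ) = 0 then u else d (0-1)) ∈ U
          rw [if_pos rfl]
          exact hu_unit hUne
        · show S.sg (if n + 1 - 1 = 0 then u else d (n + 1 - 1 - 1)) ∈ U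
          rw [if_neg (by omega)]
          have e1 : n + 1 - 1 - 1 = n - 1 := by omega
          rw [e1]
          exact hl.1
      · -- both ends new unit w : palindrome contradiction
        obtain ⟨hw1, _⟩ := hW_spec _ h0
        obtain ⟨hw1', _⟩ := hW_spec _ hl
        have htuw : S.tu (S.sg (d (n-1))) = some v := S.htutu _ hvR _ hw1'
        have hc3 : IsCh S (n+2) (fun i => if i = 0 then u else if i ≤ n then d (i-1) else v) := by
          intro i hi
          rcases i with _ | j
          · show S.tu (S.sg (if (0:ℕ) = 0 then u else if 0 ≤ n then d (0-1) else v)) =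
              some (if (1:ℕ) = 0 then u else if 1 ≤ n then d (1-1) else v)
            rw [if_pos rfl, if_neg (by omega), if_pos (by omega : 1 ≤ n)]
            show S.tu (S.sg u) = some (d 0)
            rw [hsgu]
            exact hw1
          · show S.tu (S.sg (if j + 1 = 0 then u else if j + 1 ≤ n then d (j+1-1) else v)) =
              some (if j + 1 + 1 = 0 then u else if j + 1 + 1 ≤ n then d (j+1+1-1) else v)
            rw [if_neg (show ¬ (j + 1 = 0) by omega), if_pos (show j + 1 ≤ n by omega),
              if_neg (show ¬ (j + 1 + 1 = 0) by omega)]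
            by_cases h : j + 1 + 1 ≤ n
            · rw [if_pos h]
              have e1 : j + 1 - 1 = j := by omega
              have e2 : j + 1 + 1 - 1 = j + 1 := by omega
              rw [e1, e2]
              exact hcS j (by omega)
            · rw [if_neg h]
              have e1 : j + 1 - 1 = n - 1 := by omega
              rw [e1]
              exact htuw
        refine palin S (n+2) _ (by omega) ?_ hc3 ?_
        · show (if (0:ℕ) = 0 then u else if 0 ≤ n then d (0-1) else v) ∈ S.R
          rw [if_pos rfl]
          exact huR
        · show S.sg (if n + 2 - 1 = 0 then u else if n + 2 - 1 ≤ n then d (n+2-1-1) else v) =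
            (if (0:ℕ) = 0 then u else if 0 ≤ n then d (0-1) else v)
          rw [if_neg (by omega), if_neg (by omega), if_pos rfl]
          exact hsgv
    -- apply IH
    have hcard' : R'.card ≤ N := by
      have h1 : R' ⊂ S.R := by
        rw [hR'_def]
        refine Finset.ssubset_iff_of_subset Finset.sdiff_subset |>.mpr ?_
        exact ⟨u, huR, by simp⟩
      have := Finset.card_lt_card h1
      omega
    obtain ⟨C', hC'R', hU'C', hC'iff, hC'cl⟩ :=
      IH S' U' (by rw [hS'R]; exact hcard') (by rw [hS'R]; exact hU'R')
        (by rw [hS'tu]; exact hU'tu) hbad'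
    rw [hS'R] at hC'R' hC'iff hC'cl
    rw [hS'sg] at hC'iff
    rw [hS'tu] at hC'cl
    have huC' : u ∉ C' := fun h => (((hmemR' u).mp (hC'R' h)).2.1) rfl
    have hvC' : v ∉ C' := fun h => (((hmemR' v).mp (hC'R' h)).2.2) rfl
    refine ⟨insert u C', ?_, ?_, ?_, ?_⟩
    · intro a ha
      rcases Finset.mem_insert.mp ha with h | h
      · rw [h]; exact huR
      · exact ((hmemR' a).mp (hC'R' h)).1
    · intro a ha
      by_cases hau : a = u
      · rw [hau]; exact Finset.mem_insert_self _ _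
      by_cases hav : a = v
      · rw [hav] at ha; exact absurd ha hvU
      · exact Finset.mem_insert_of_mem (hU'C' ((hmemU' a).mpr (Or.inl ⟨ha, hau, hav⟩)))
    · intro a haR
      by_cases hau : a = u
      · subst hau
        constructor
        · intro _
          rw [hsgu]
          intro hmem
          rcases Finset.mem_insert.mp hmem with h | h
          · exact hvu h
          · exact hvC' h
        · intro _
          exact Finset.mem_insert_self _ _
      by_cases hav : a = v
      · subst hav
        constructor
        · intro hmem
          rcases Finset.mem_insert.mp hmem with h | h
          · exact absurd h hvu
          · exact absurd h hvC'
        · intro hmem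
          exfalso
          apply hmem
          rw [hsgv]
          exact Finset.mem_insert_self _ _
      · have haR' : a ∈ R' := (hmemR' a).mpr ⟨haR, hau, hav⟩
        have hsga : S.sg a ∈ R' := hsgR' _ haR'
        have hsgau : S.sg a ≠ u := ((hmemR' _).mp hsga).2.1
        constructor
        · intro hmem hmem2
          have ha : a ∈ C' := by
            rcases Finset.mem_insert.mp hmem with h | h
            · exact absurd h hau
            · exact h
          apply (hC'iff a haR').mp ha
          rcases Finset.mem_insert.mp hmem2 with h | h
          · exact absurd h hsgau
          · exact h
        · intro hmem
          have h2 : S.sg a ∉ C' := fun h => hmem (Finset.mem_insert_of_mem h)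
          exact Finset.mem_insert_of_mem ((hC'iff a haR').mpr h2)
    · intro a haR b htab
      by_cases hau : a = u
      · rw [hau]; exact Or.inl (Finset.mem_insert_self _ _)
      by_cases hav : a = v
      · by_cases hbu : b = u
        · rw [hbu]; exact Or.inr (Finset.mem_insert_self _ _)
        · have htab' : S.tu v = some b := by rw [← hav]; exact htab
          have hbW : b ∈ W := hW_mem _ htab' hbu
          exact Or.inr (Finset.mem_insert_of_mem (hU'C' ((hmemU' b).mpr (Or.inr hbW))))
      · have haR' : a ∈ R' := (hmemR' a).mpr ⟨haR, hau, hav⟩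
        by_cases hbu : b = u
        · rw [hbu]; exact Or.inr (Finset.mem_insert_self _ _)
        by_cases hbv : b = v
        · have htab' : S.tu a = some v := by rw [← hbv]; exact htab
          have h2 : S.tu v = some a := S.htutu _ haR _ htab'
          have haW : a ∈ W := hW_mem _ h2 hau
          exact Or.inl (Finset.mem_insert_of_mem (hU'C' ((hmemU' a).mpr (Or.inr haW))))
        · have := hC'cl a haR' b (htu'_eq _ _ htab hbu hbv)
          rcases this with h | h
          · exact Or.inl (Finset.mem_insert_of_mem h)
          · exact Or.inr (Finset.mem_insert_of_mem h)

end ZZAux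

end ZZAuxSec

namespace MGraph

section NetProof

set_option linter.unusedSectionVars false

variable {V A : Type} [Fintype V] [Fintype A] [DecidableEq V] [DecidableEq A]

-- generic subtype cardinality helpers
lemma aux_two_le {α : Type} [Fintype α] {p : α → Prop} [DecidablePred p] {a b : α}
    (ha : p a) (hb : p b) (hab : a ≠ b) : 2 ≤ Fintype.card {x // p x} := by
  have : Nontrivial {x // p x} := ⟨⟨a, ha⟩, ⟨b, hb⟩, by simp [hab]⟩
  exact Fintype.one_lt_card_iff_nontrivial.mpr this

lemma aux_unique {α : Type} [Fintype α] {p : α → Prop} [DecidablePred p]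
    (h : Fintype.card {x // p x} ≤ 1) {a b : α} (ha : p a) (hb : p b) : a = b := by
  have := Fintype.card_le_one_iff.mp h ⟨a, ha⟩ ⟨b, hb⟩
  exact congrArg Subtype.val this

lemma aux_mem_of_card_two {α : Type} [Fintype α] {p : α → Prop} [DecidablePred p]
    (h : Fintype.card {x // p x} = 2) {a b c : α} (ha : p a) (hb : p b) (hab : a ≠ b)
    (hc : p c) : c = a ∨ c = b := by
  by_contra hcon
  push_neg at hcon
  have h3 : 2 < Fintype.card {x // p x} := by
    rw [Fintype.two_lt_card_iff]
    refine ⟨⟨a, ha⟩, ⟨b, hb⟩, ⟨c, hc⟩, ?_, ?_, ?_⟩ <;>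
      simp [hab, Ne.symm hcon.1, Ne.symm hcon.2]
  omega

lemma aux_exists {α : Type} [Fintype α] {p : α → Prop} [DecidablePred p]
    (h : 1 ≤ Fintype.card {x // p x}) : ∃ a, p a := by
  have : Nonempty {x // p x} := Fintype.card_pos_iff.mp h
  obtain ⟨⟨a, ha⟩⟩ := this
  exact ⟨a, ha⟩

variable {D : MGraph V A}

-- classification lemmas
lemma retic_of_two_in (hbin : D.IsBinary) {a b : A} (hab : a ≠ b)
    (h : D.head a = D.head b) : D.IsRetic (D.head a) := by
  have h2 : 2 ≤ D.indeg (D.head a) :=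
    aux_two_le (p := fun x => D.head x = D.head a) rfl h.symm hab
  rcases hbin.1.1.2.2.2 (D.head a) with hh | hh | hh | hh
  · rw [hh.1] at h2; omega
  · rw [hh.1] at h2; omega
  · rw [hh.1] at h2; omega
  · exact hh

lemma tree_of_two_out (hbin : D.IsBinary) {a b : A} (hab : a ≠ b)
    (h : D.tail a = D.tail b) : D.IsTreeNode (D.tail a) := by
  have h2 : 2 ≤ D.outdeg (D.tail a) :=
    aux_two_le (p := fun x => D.tail x = D.tail a) rfl h.symm hab
  rcases hbin.1.1.2.2.2 (D.tail a) with hh | hh | hh | hh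
  · rw [hh.2] at h2; omega
  · rw [hh.2] at h2; omega
  · exact hh
  · rw [hh.2] at h2; omega

lemma retic_out_unique (hr : D.IsRetic v) {a b : A} (ha : D.tail a = v)
    (hb : D.tail b = v) : a = b := by
  have h1 : D.outdeg v ≤ 1 := le_of_eq hr.2
  exact aux_unique (p := fun x => D.tail x = v) h1 ha hb

lemma retic_not_tree (hr : D.IsRetic v) : ¬ D.IsTreeNode v := by
  intro ht
  have := ht.2
  rw [hr.2] at this
  omega

lemma retic_not_leaf (hr : D.IsRetic v) : ¬ D.IsLeaf v := by
  intro hl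
  have := hr.1
  rw [hl.1] at this
  omega

lemma in_arcs_pair (hbin : D.IsBinary) {v : V} (hr : D.IsRetic v) {a b c : A}
    (ha : D.head a = v) (hb : D.head b = v) (hab : a ≠ b) (hc : D.head c = v) :
    c = a ∨ c = b :=
  aux_mem_of_card_two (p := fun x => D.head x = v) (hbin.2 v hr) ha hb hab hc

lemma out_arcs_pair (hbin : D.IsBinary) {v : V} (ht : D.IsTreeNode v) {a b c : A}
    (ha : D.tail a = v) (hb : D.tail b = v) (hab : a ≠ b) (hc : D.tail c = v) :
    c = a ∨ c = b :=
  aux_mem_of_card_two (p := fun x => D.tail x = v) (hbin.1.2 v ht) ha hb hab hc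

lemma nonleaf_exists_out (hbin : D.IsBinary) {v : V} (hl : ¬ D.IsLeaf v) :
    ∃ a : A, D.tail a = v := by
  apply aux_exists (p := fun x => D.tail x = v)
  show 1 ≤ D.outdeg v
  rcases hbin.1.1.2.2.2 v with hh | hh | hh | hh
  · rw [hh.2]
  · exact absurd hh hl
  · have := hh.2; omega
  · rw [hh.2]

-- the sibling (other in-arc of the same reticulation head)
noncomputable def sgf (D : MGraph V A) (a : A) : A :=
  if h : ∃ b, b ≠ a ∧ D.head b = D.head a then h.choose else a

lemma sgf_spec (hbin : D.IsBinary) {a : A} (ha : D.IsRetic (D.head a)) :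
    D.sgf a ≠ a ∧ D.head (D.sgf a) = D.head a := by
  have hcard : D.indeg (D.head a) = 2 := hbin.2 _ ha
  have hex : ∃ b, b ≠ a ∧ D.head b = D.head a := by
    have h1 : 1 < Fintype.card {x // D.head x = D.head a} := by
      have : D.indeg (D.head a) = Fintype.card {x // D.head x = D.head a} := rfl
      omega
    obtain ⟨x, y, hxy⟩ := Fintype.one_lt_card_iff.mp h1
    by_cases hx : x.1 = a
    · refine ⟨y.1, ?_, y.2⟩
      intro hy
      exact hxy (Subtype.ext (hx.trans hy.symm))
    · exact ⟨x.1, hx, x.2⟩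
  rw [sgf, dif_pos hex]
  exact hex.choose_spec

lemma sgf_other (hbin : D.IsBinary) {a c : A} (ha : D.IsRetic (D.head a))
    (hc : D.head c = D.head a) (hca : c ≠ a) : c = D.sgf a := by
  obtain ⟨h1, h2⟩ := sgf_spec hbin ha
  rcases in_arcs_pair hbin ha rfl h2 (Ne.symm h1) hc with h | h
  · exact absurd h hca
  · exact h

lemma sgf_invol (hbin : D.IsBinary) {a : A} (ha : D.IsRetic (D.head a)) :
    D.sgf (D.sgf a) = a := by
  obtain ⟨h1, h2⟩ := sgf_spec hbin ha
  have ha' : D.IsRetic (D.head (D.sgf a)) := by rw [h2]; exact ha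
  exact (sgf_other hbin ha' h2.symm (Ne.symm h1)).symm

-- the partner out-arc at a tree node, when both out-arc heads are reticulations
noncomputable def tuf (D : MGraph V A) (a : A) : Option A :=
  if h : D.IsRetic (D.head a) ∧ D.IsTreeNode (D.tail a) ∧
      ∃ b, b ≠ a ∧ D.tail b = D.tail a ∧ D.IsRetic (D.head b) then
    some h.2.2.choose
  else none

lemma tuf_spec {a b : A} (h : D.tuf a = some b) :
    D.IsRetic (D.head a) ∧ D.IsTreeNode (D.tail a) ∧ b ≠ a ∧ D.tail b = D.tail a ∧
      D.IsRetic (D.head b) := by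
  rw [tuf] at h
  by_cases hc : D.IsRetic (D.head a) ∧ D.IsTreeNode (D.tail a) ∧
      ∃ b, b ≠ a ∧ D.tail b = D.tail a ∧ D.IsRetic (D.head b)
  · rw [dif_pos hc] at h
    have hb := Option.some.inj h
    have hspec := hc.2.2.choose_spec
    rw [hb] at hspec
    exact ⟨hc.1, hc.2.1, hspec⟩
  · rw [dif_neg hc] at h
    exact absurd h (by simp)

lemma tuf_eq_some (hbin : D.IsBinary) {a b : A} (h1 : D.IsRetic (D.head a))
    (h2 : b ≠ a) (h3 : D.tail b = D.tail a) (h4 : D.IsRetic (D.head b)) :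
    D.tuf a = some b := by
  have ht : D.IsTreeNode (D.tail a) := tree_of_two_out hbin (Ne.symm h2) h3.symm
  have hc : D.IsRetic (D.head a) ∧ D.IsTreeNode (D.tail a) ∧
      ∃ b, b ≠ a ∧ D.tail b = D.tail a ∧ D.IsRetic (D.head b) :=
    ⟨h1, ht, b, h2, h3, h4⟩
  rw [tuf, dif_pos hc]
  obtain ⟨hc1, hc2, hc3⟩ := hc.2.2.choose_spec
  rcases out_arcs_pair hbin ht rfl h3 (Ne.symm h2) hc2 with h | h
  · exact absurd h hc1
  · rw [h]

lemma tuf_none_of_retic_tail {a : A} (hr : D.IsRetic (D.tail a)) : D.tuf a = none := by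
  rw [tuf, dif_neg]
  intro hc
  exact retic_not_tree hr hc.2.1

-- finsets R and U
noncomputable def Rset (D : MGraph V A) : Finset A :=
  Finset.univ.filter (fun a => D.IsRetic (D.head a))

noncomputable def Uset (D : MGraph V A) : Finset A :=
  Finset.univ.filter (fun a => D.IsRetic (D.head a) ∧ D.IsRetic (D.tail a))

lemma mem_Rset {a : A} : a ∈ Rset D ↔ D.IsRetic (D.head a) := by
  simp [Rset]

lemma mem_Uset {a : A} : a ∈ Uset D ↔ D.IsRetic (D.head a) ∧ D.IsRetic (D.tail a) := by
  simp [Uset]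

noncomputable def netSys (D : MGraph V A) (hbin : D.IsBinary) : ZZAux.Sys A where
  R := Rset D
  sg := D.sgf
  tu := D.tuf
  hsgR := by
    intro a ha
    rw [mem_Rset] at ha ⊢
    rw [(sgf_spec hbin ha).2]
    exact ha
  hsgsg := fun a ha => sgf_invol hbin (mem_Rset.mp ha)
  hsgne := fun a ha => (sgf_spec hbin (mem_Rset.mp ha)).1
  htuR := by
    intro a ha b hb
    rw [mem_Rset]
    exact (tuf_spec hb).2.2.2.2
  htutu := by
    intro a ha b hb
    obtain ⟨h1, h2, h3, h4, h5⟩ := tuf_spec hb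
    exact tuf_eq_some hbin h5 (Ne.symm h3) h4.symm h1
  htune := by
    intro a ha h
    exact (tuf_spec h).2.2.1 rfl

lemma tree_not_leaf {v : V} (ht : D.IsTreeNode v) : ¬ D.IsLeaf v := by
  intro hl
  have h1 := ht.2
  rw [hl.2] at h1
  omega

lemma forced_in_S {S : Set A} (hbin : D.IsBinary) (hsupp : D.IsSupportTree S) {a : A}
    (hr : D.IsRetic (D.tail a)) : a ∈ S := by
  obtain ⟨b, hbS, hbt⟩ := hsupp.2.2 (D.tail a) (retic_not_leaf hr)
  have : b = a := retic_out_unique hr hbt rfl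
  rwa [this] at hbS

lemma zz_pair {l : List A} (hnd : l.Nodup) {i j : ℕ} (hij : i ≠ j)
    (hi : i < l.length) (hj : j < l.length) : l[i] ≠ l[j] := by
  intro h
  exact hij ((hnd.getElem_inj_iff).mp h)

theorem not_wfence_of_treebased (hbin : D.IsBinary) (htb : D.IsTreeBased)
    (l : List A) : ¬ D.IsWFence l := by
  obtain ⟨S, hsupp⟩ := htb
  intro hW
  obtain ⟨hmax, hlen2, heven, hhd, hlast⟩ := hW
  obtain ⟨⟨hne, hnd, hzz⟩, _⟩ := hmax
  have hk : 2 ≤ l.length := hlen2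
  set g : ℕ → A := fun i => l.getD i (l.head hne) with hg_def
  have hg : ∀ i, i < l.length → l[i]? = some (g i) := by
    intro i hi
    rw [List.getElem?_eq_getElem hi]
    exact congrArg some (List.getD_eq_getElem l (l.head hne) hi).symm
  have hgne : ∀ i j, i ≠ j → i < l.length → j < l.length → g i ≠ g j := by
    intro i j hij hi hj h
    have h1 : g i = l[i] := List.getD_eq_getElem l (l.head hne) hi
    have h2 : g j = l[j] := List.getD_eq_getElem l (l.head hne) hj
    rw [h1, h2] at h
    exact hij (hnd.getElem_inj_iff.mp h)
  have hhd0 : l.head? = some (g 0) := by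
    rw [List.head?_eq_getElem?]
    exact hg 0 (by omega)
  have hlast0 : l.getLast? = some (g (l.length - 1)) := by
    rw [List.getLast?_eq_getElem?]
    exact hg _ (by omega)
  have hr0 : D.IsRetic (D.tail (g 0)) := hhd _ hhd0
  have hrlast : D.IsRetic (D.tail (g (l.length - 1))) := hlast _ hlast0
  rcases hzz with hzz | hzz
  case inr =>
    have h01 : D.tail (g 0) = D.tail (g 1) := hzz.1 0 _ _ (hg 0 (by omega)) (hg 1 (by omega))
    exact hgne 0 1 (by omega) (by omega) (by omega)
      (retic_out_unique hr0 rfl h01.symm)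
  obtain ⟨hzzH, hzzT⟩ := hzz
  have hH : ∀ i : ℕ, 2*i+1 < l.length → D.head (g (2*i)) = D.head (g (2*i+1)) := by
    intro i hi
    exact hzzH i _ _ (hg _ (by omega)) (hg _ hi)
  have hT : ∀ i : ℕ, 2*i+2 < l.length → D.tail (g (2*i+1)) = D.tail (g (2*i+2)) := by
    intro i hi
    exact hzzT i _ _ (hg _ (by omega)) (hg _ hi)
  -- alternation of membership in S
  have key : ∀ i : ℕ, 2*i+1 < l.length → g (2*i) ∈ S ∧ g (2*i+1) ∉ S := by
    intro i
    induction i with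
    | zero =>
      intro hi
      have h0S : g 0 ∈ S := forced_in_S hbin hsupp hr0
      refine ⟨h0S, ?_⟩
      have hhead : D.head (g 0) = D.head (g 1) := hH 0 (by omega)
      have hne01 : g 0 ≠ g 1 := hgne 0 1 (by omega) (by omega) (by omega)
      have hret : D.IsRetic (D.head (g 0)) := retic_of_two_in hbin hne01 hhead
      obtain ⟨x, hx, hxu⟩ := hsupp.2.1 _ hret
      intro h1S
      have e1 : g 1 = x := hxu _ ⟨h1S, hhead.symm⟩
      have e0 : g 0 = x := hxu _ ⟨h0S, rfl⟩
      exact hne01 (e0 ▸ e1 ▸ rfl)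
    | succ j ih =>
      intro hi
      have e2 : 2*(j+1) = 2*j+2 := by omega
      have e3 : 2*(j+1)+1 = 2*j+3 := by omega
      rw [e3] at hi ⊢
      rw [e2]
      have hj1 : 2*j+1 < l.length := by omega
      have hjS := (ih hj1).2
      have htl : D.tail (g (2*j+1)) = D.tail (g (2*j+2)) := hT j (by omega)
      have hnej : g (2*j+1) ≠ g (2*j+2) := hgne _ _ (by omega) (by omega) (by omega)
      have htree : D.IsTreeNode (D.tail (g (2*j+1))) := tree_of_two_out hbin hnej htl
      obtain ⟨y, hyS, hyt⟩ := hsupp.2.2 _ (tree_not_leaf htree)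
      have hy2 : y = g (2*j+2) := by
        rcases out_arcs_pair hbin htree rfl htl.symm hnej hyt with h | h
        · exact absurd (h ▸ hyS) hjS
        · exact h
      have h2S : g (2*j+2) ∈ S := hy2 ▸ hyS
      refine ⟨h2S, ?_⟩
      have hhead : D.head (g (2*j+2)) = D.head (g (2*j+3)) := by
        have := hH (j+1) (by rw [e3]; exact hi)
        rwa [e3, e2] at this
      have hne23 : g (2*j+2) ≠ g (2*j+3) := hgne _ _ (by omega) (by omega) (by omega)
      have hret : D.IsRetic (D.head (g (2*j+2))) := retic_of_two_in hbin hne23 hhead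
      obtain ⟨x, hx, hxu⟩ := hsupp.2.1 _ hret
      intro h3S
      have e1 : g (2*j+3) = x := hxu _ ⟨h3S, hhead.symm⟩
      have e0 : g (2*j+2) = x := hxu _ ⟨h2S, rfl⟩
      exact hne23 (e0 ▸ e1 ▸ rfl)
  -- contradiction at the last arc
  obtain ⟨m, hm⟩ := heven
  have hm1 : m ≥ 1 := by omega
  have hidx : 2*(m-1)+1 = l.length - 1 := by omega
  have hnotin := (key (m-1) (by omega)).2
  rw [hidx] at hnotin
  exact hnotin (forced_in_S hbin hsupp hrlast)

-- Construction of a W-fence from a bad chain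
theorem wfence_of_bad (hbin : D.IsBinary)
    (hB : ZZAux.Bad (netSys D hbin) (Uset D)) : ∃ l : List A, D.IsWFence l := by
  classical
  set Sy := netSys D hbin with hSy
  have hSyR : Sy.R = Rset D := rfl
  have hSysg : Sy.sg = D.sgf := rfl
  have hSytu : Sy.tu = D.tuf := rfl
  set Q : ℕ → Prop := fun n => ∃ d : ℕ → A, 0 < n ∧ ZZAux.IsCh Sy n d ∧
    d 0 ∈ Uset D ∧ D.sgf (d (n - 1)) ∈ Uset D with hQ
  have hQex : ∃ n, Q n := by
    obtain ⟨n, d, h1, h2, h3, h4⟩ := hB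
    exact ⟨n, d, h1, h2, h3, h4⟩
  set n := Nat.find hQex with hn_def
  obtain ⟨d, hn, hch, hd0, hdl⟩ : Q n := Nat.find_spec hQex
  have hmin : ∀ m, m < n → ¬ Q m := fun m hm => Nat.find_min hQex hm
  have hUR : ∀ a ∈ Uset D, a ∈ Rset D := by
    intro a ha
    rw [mem_Uset] at ha
    exact mem_Rset.mpr ha.1
  have memd : ∀ i, i < n → d i ∈ Rset D := ZZAux.chain_mem (hUR _ hd0) hch
  have memdR : ∀ i, i < n → D.IsRetic (D.head (d i)) := fun i hi => mem_Rset.mp (memd i hi)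
  -- palindrome exclusions
  have pal : ∀ i j, i ≤ j → j < n → D.sgf (d j) ≠ d i := by
    intro i j hij hj h
    apply ZZAux.palin Sy (j - i + 1) (fun m => d (i + m)) (by omega)
      (by simpa [hSyR] using memd i (by omega))
    · intro m hm
      have e : i + (m + 1) = (i + m) + 1 := by omega
      show Sy.tu (Sy.sg (d (i + m))) = some (d (i + (m+1)))
      rw [e]
      exact hch (i + m) (by omega)
    · show D.sgf (d (i + (j - i + 1 - 1))) = d (i + 0)
      have e1 : i + (j - i + 1 - 1) = j := by omega
      have e2 : i + 0 = i := by omega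
      rw [e1, e2]
      exact h
  -- distinctness by minimality
  have dinj : ∀ i j, i < j → j < n → d i ≠ d j := by
    intro i j hij hj h
    apply hmin (n - (j - i)) (by omega)
    refine ⟨fun t => if t ≤ i then d t else d (t + (j - i)), by omega, ?_, ?_, ?_⟩
    · intro t ht
      show Sy.tu (Sy.sg (if t ≤ i then d t else d (t + (j - i)))) =
        some (if t + 1 ≤ i then d (t+1) else d (t + 1 + (j - i)))
      by_cases h1 : t + 1 ≤ i
      · rw [if_pos (by omega), if_pos h1]
        exact hch t (by omega)
      by_cases h2 : t ≤ i
      · -- t = i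
        have hti : t = i := by omega
        subst hti
        rw [if_pos h2, if_neg h1, h]
        have e : t + 1 + (j - t) = j + 1 := by omega
        rw [e]
        exact hch j (by omega)
      · rw [if_neg h2, if_neg (by omega)]
        have e : t + 1 + (j - i) = (t + (j - i)) + 1 := by omega
        rw [e]
        exact hch (t + (j - i)) (by omega)
    · show (if (0:ℕ) ≤ i then d 0 else d (0 + (j - i))) ∈ D.Uset
      rw [if_pos (by omega)]
      exact hd0
    · show D.sgf (if n - (j - i) - 1 ≤ i then d (n - (j - i) - 1)
        else d (n - (j - i) - 1 + (j - i))) ∈ D.Uset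
      by_cases h1 : n - (j - i) - 1 ≤ i
      · have hj1 : j = n - 1 := by omega
        have h2 : n - (j - i) - 1 = i := by omega
        rw [if_pos h1, h2, h, hj1]
        exact hdl
      · rw [if_neg h1]
        have e : n - (j - i) - 1 + (j - i) = n - 1 := by omega
        rw [e]
        exact hdl
  have dsg : ∀ i j, i < n → j < n → d i ≠ D.sgf (d j) := by
    intro i j hi hj h
    rcases le_or_gt i j with hij | hij
    · exact pal i j hij hj h.symm
    · have h2 : D.sgf (d i) = d j := by
        have := congrArg D.sgf h
        rwa [sgf_invol hbin (memdR j hj)] at this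
      exact pal j i (by omega) hi h2
  -- the list
  set f : Fin (2*n) → A := fun m =>
    if m.1 % 2 = 0 then d (m.1 / 2) else D.sgf (d (m.1 / 2)) with hf_def
  have hf_even : ∀ (i : ℕ) (h : 2*i < 2*n), f ⟨2*i, h⟩ = d i := by
    intro i h
    rw [hf_def]
    simp only [if_pos (by omega : (2*i) % 2 = 0)]
    congr 1
    omega
  have hf_odd : ∀ (i : ℕ) (h : 2*i+1 < 2*n), f ⟨2*i+1, h⟩ = D.sgf (d i) := by
    intro i h
    rw [hf_def]
    simp only [if_neg (by omega : ¬ ((2*i+1) % 2 = 0))]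
    congr 2
    omega
  have finj : Function.Injective f := by
    intro m m' hmm
    have hm2 : m.1 / 2 < n := by omega
    have hm'2 : m'.1 / 2 < n := by omega
    rw [hf_def] at hmm
    simp only at hmm
    by_cases h1 : m.1 % 2 = 0 <;> by_cases h2 : m'.1 % 2 = 0
    · rw [if_pos h1, if_pos h2] at hmm
      have : m.1 / 2 = m'.1 / 2 := by
        by_contra hne
        rcases Nat.lt_or_ge (m.1/2) (m'.1/2) with hlt | hge
        · exact dinj _ _ hlt hm'2 hmm
        · exact dinj _ _ (by omega) hm2 hmm.symm
      apply Fin.ext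
      omega
    · rw [if_pos h1, if_neg h2] at hmm
      exact absurd hmm (dsg _ _ hm2 hm'2)
    · rw [if_neg h1, if_pos h2] at hmm
      exact absurd hmm.symm (dsg _ _ hm'2 hm2)
    · rw [if_neg h1, if_neg h2] at hmm
      have h3 : d (m.1/2) = d (m'.1/2) := by
        have := congrArg D.sgf hmm
        rwa [sgf_invol hbin (memdR _ hm2), sgf_invol hbin (memdR _ hm'2)] at this
      have : m.1 / 2 = m'.1 / 2 := by
        by_contra hne
        rcases Nat.lt_or_ge (m.1/2) (m'.1/2) with hlt | hge
        · exact dinj _ _ hlt hm'2 h3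
        · exact dinj _ _ (by omega) hm2 h3.symm
      apply Fin.ext
      omega
  set l : List A := List.ofFn f with hl_def
  have hlen : l.length = 2*n := by rw [hl_def, List.length_ofFn]
  have hlne : l ≠ [] := by
    intro h
    rw [h] at hlen
    simp at hlen
    omega
  have hnd : l.Nodup := by
    rw [hl_def]
    exact List.nodup_ofFn.mpr finj
  have hget : ∀ (m : ℕ) (h : m < 2*n), l[m]? = some (f ⟨m, h⟩) := by
    intro m h
    have h2 : m < (List.ofFn f).length := by simpa using h
    have he : l[m]? = (List.ofFn f)[m]? := rfl
    rw [he, List.getElem?_eq_getElem h2, List.getElem_ofFn]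
  have hget' : ∀ (m : ℕ) (x : A), l[m]? = some x → ∃ h : m < 2*n, x = f ⟨m, h⟩ := by
    intro m x hx
    have hlt : m < l.length := by
      by_contra h
      rw [List.getElem?_eq_none (by omega)] at hx
      cases hx
    refine ⟨by omega, ?_⟩
    rw [hget m (by omega)] at hx
    exact (Option.some.inj hx).symm
  have hmeml : ∀ x, x ∈ l ↔ ∃ m : Fin (2*n), f m = x := by
    intro x
    rw [hl_def, List.mem_ofFn]
  have hf_val : ∀ (m : ℕ) (h : m < 2*n),
      f ⟨m, h⟩ = if m % 2 = 0 then d (m/2) else D.sgf (d (m/2)) := fun m h => rfl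
  have hstep : ∀ i, i + 1 < n → D.tuf (D.sgf (d i)) = some (d (i+1)) := by
    intro i hi
    exact hch i hi
  -- IsZZ
  have hzzl : D.IsZZ l := by
    refine ⟨hlne, hnd, Or.inl ⟨?_, ?_⟩⟩
    · intro i x y hx hy
      obtain ⟨h1, rfl⟩ := hget' _ _ hx
      obtain ⟨h2, rfl⟩ := hget' _ _ hy
      rw [hf_val _ h1, hf_val _ h2, if_pos (by omega : (2*i) % 2 = 0),
        if_neg (by omega : ¬ ((2*i+1) % 2 = 0)),
        (by omega : (2*i)/2 = i), (by omega : (2*i+1)/2 = i)]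
      exact ((sgf_spec hbin (memdR i (by omega))).2).symm
    · intro i x y hx hy
      obtain ⟨h1, rfl⟩ := hget' _ _ hx
      obtain ⟨h2, rfl⟩ := hget' _ _ hy
      rw [hf_val _ h1, hf_val _ h2, if_neg (by omega : ¬ ((2*i+1) % 2 = 0)),
        if_pos (by omega : (2*i+2) % 2 = 0),
        (by omega : (2*i+1)/2 = i), (by omega : (2*i+2)/2 = i+1)]
      have hs := hstep i (by omega)
      exact ((tuf_spec hs).2.2.2.1).symm
  -- end conditions
  have hWhead : ∀ x, l.head? = some x → D.IsRetic (D.tail x) := by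
    intro x hx
    rw [List.head?_eq_getElem?] at hx
    obtain ⟨h1, rfl⟩ := hget' _ _ hx
    rw [hf_val _ h1, if_pos (by omega : (0:ℕ) % 2 = 0)]
    exact (mem_Uset.mp hd0).2
  have hWlast : ∀ y, l.getLast? = some y → D.IsRetic (D.tail y) := by
    intro y hy
    rw [List.getLast?_eq_getElem?, hlen] at hy
    obtain ⟨h1, rfl⟩ := hget' _ _ hy
    rw [hf_val _ h1, if_neg (by omega : ¬ ((2*n-1) % 2 = 0)),
      (by omega : (2*n-1)/2 = n-1)]
    exact (mem_Uset.mp hdl).2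
  -- neighbor lemma
  have neighbor : ∀ (m : ℕ) (hm : m < 2*n) (z : A), z ≠ f ⟨m, hm⟩ →
      (D.head z = D.head (f ⟨m, hm⟩) ∨ D.tail z = D.tail (f ⟨m, hm⟩)) → z ∈ l := by
    intro m hm z hzne hshare
    have hi2 : m / 2 < n := by omega
    set i := m / 2 with hi_def
    have hreti : D.IsRetic (D.head (d i)) := memdR i hi2
    by_cases hpar : m % 2 = 0
    · -- f m = d i
      have hfm : f ⟨m, hm⟩ = d i := by rw [hf_val _ hm, if_pos hpar]
      rw [hfm] at hzne hshare
      rcases hshare with hshare | hshare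
      · have hz : z = d i ∨ z = D.sgf (d i) :=
          in_arcs_pair hbin hreti rfl (sgf_spec hbin hreti).2 (Ne.symm (sgf_spec hbin hreti).1) hshare
        rcases hz with hz | hz
        · exact absurd hz hzne
        · rw [hmeml]
          refine ⟨⟨2*i+1, by omega⟩, ?_⟩
          rw [hf_odd i (by omega)]
          exact hz.symm
      · by_cases hi0 : i = 0
        · have hr : D.IsRetic (D.tail (d i)) := by
            rw [hi0]
            exact (mem_Uset.mp hd0).2
          exact absurd (retic_out_unique hr hshare rfl) hzne
        · have hs := hstep (i-1) (by omega)
          rw [(by omega : i - 1 + 1 = i)] at hs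
          obtain ⟨ts1, ts2, ts3, ts4, ts5⟩ := tuf_spec hs
          have hz : z = D.sgf (d (i-1)) ∨ z = d i := by
            apply out_arcs_pair hbin ts2 rfl ts4 (Ne.symm ts3)
            rw [hshare]
            exact ts4
          rcases hz with hz | hz
          · rw [hmeml]
            refine ⟨⟨2*(i-1)+1, by omega⟩, ?_⟩
            rw [hf_odd (i-1) (by omega)]
            exact hz.symm
          · exact absurd hz hzne
    · -- f m = sgf (d i)
      have hfm : f ⟨m, hm⟩ = D.sgf (d i) := by rw [hf_val _ hm, if_neg hpar]
      rw [hfm] at hzne hshare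
      rcases hshare with hshare | hshare
      · have hshare2 : D.head z = D.head (d i) := by
          rw [hshare, (sgf_spec hbin hreti).2]
        have hz : z = d i ∨ z = D.sgf (d i) :=
          in_arcs_pair hbin hreti rfl (sgf_spec hbin hreti).2 (Ne.symm (sgf_spec hbin hreti).1) hshare2
        rcases hz with hz | hz
        · rw [hmeml]
          refine ⟨⟨2*i, by omega⟩, ?_⟩
          rw [hf_even i (by omega)]
          exact hz.symm
        · exact absurd hz hzne
      · by_cases hilast : i = n - 1 ∧ m = 2*n - 1
        · obtain ⟨hi1, -⟩ := hilast
          have hr : D.IsRetic (D.tail (D.sgf (d i))) := by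
            rw [hi1]
            exact (mem_Uset.mp hdl).2
          exact absurd (retic_out_unique hr hshare rfl) hzne
        · have hmn : i + 1 < n := by
            rcases Nat.lt_or_ge (i+1) n with h | h
            · exact h
            · exfalso
              apply hilast
              constructor <;> omega
          have hs := hstep i hmn
          obtain ⟨ts1, ts2, ts3, ts4, ts5⟩ := tuf_spec hs
          have hz : z = D.sgf (d i) ∨ z = d (i+1) := by
            apply out_arcs_pair hbin ts2 rfl ts4 (Ne.symm ts3)
            rw [hshare]
          rcases hz with hz | hz
          · exact absurd hz hzne
          · rw [hmeml]
            refine ⟨⟨2*(i+1), by omega⟩, ?_⟩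
            rw [hf_even (i+1) (by omega)]
            exact hz.symm
  -- maximality
  have hmaxzz : ∀ l' : List A, D.IsZZ l' → l.Sublist l' → l' = l := by
    intro l' hzz' hsub
    obtain ⟨hne', hnd', halt'⟩ := hzz'
    have hq : ∀ (L : List A) (j : ℕ) (x : A), L[j]? = some x →
        ∃ h : j < L.length, L[j] = x := by
      intro L j x hx
      have hlt : j < L.length := by
        by_contra h
        rw [List.getElem?_eq_none (by omega)] at hx
        cases hx
      refine ⟨hlt, ?_⟩
      rw [List.getElem?_eq_getElem hlt] at hx
      exact Option.some.inj hx
    have adj : ∀ (j : ℕ) (x y : A), l'[j]? = some x → l'[j+1]? = some y →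
        D.head x = D.head y ∨ D.tail x = D.tail y := by
      intro j x y hx hy
      rcases Nat.even_or_odd j with ⟨i, hji⟩ | ⟨i, hji⟩
      · have hj2 : j = 2*i := by omega
        subst hj2
        rcases halt' with ⟨hA, hB⟩ | ⟨hA, hB⟩
        · exact Or.inl (hA i x y hx hy)
        · exact Or.inr (hA i x y hx hy)
      · have hj2 : j = 2*i+1 := by omega
        subst hj2
        rcases halt' with ⟨hA, hB⟩ | ⟨hA, hB⟩
        · exact Or.inr (hB i x y hx hy)
        · exact Or.inl (hB i x y hx hy)
    have up : ∀ (j : ℕ) (x y : A), l'[j]? = some x → x ∈ l →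
        l'[j+1]? = some y → y ∈ l := by
      intro j x y hx hxl hy
      obtain ⟨m, hm⟩ := (hmeml x).mp hxl
      have hxy : y ≠ x := by
        obtain ⟨h1, e1⟩ := hq _ _ _ hx
        obtain ⟨h2, e2⟩ := hq _ _ _ hy
        rw [← e1, ← e2]
        intro hh
        have := hnd'.getElem_inj_iff.mp hh
        omega
      have hshare := adj j x y hx hy
      rw [← hm] at hshare hxy
      exact neighbor m.1 m.2 y hxy (by tauto)
    have down : ∀ (j : ℕ) (x y : A), l'[j]? = some x → l'[j+1]? = some y →
        y ∈ l → x ∈ l := by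
      intro j x y hx hy hyl
      obtain ⟨m, hm⟩ := (hmeml y).mp hyl
      have hxy : x ≠ y := by
        obtain ⟨h1, e1⟩ := hq _ _ _ hx
        obtain ⟨h2, e2⟩ := hq _ _ _ hy
        rw [← e1, ← e2]
        intro hh
        have := hnd'.getElem_inj_iff.mp hh
        omega
      have hshare := adj j x y hx hy
      rw [← hm] at hshare hxy
      exact neighbor m.1 m.2 x hxy (by tauto)
    -- base position
    have hf0l : f ⟨0, by omega⟩ ∈ l := (hmeml _).mpr ⟨_, rfl⟩
    have hf0l' : f ⟨0, by omega⟩ ∈ l' := hsub.subset hf0l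
    obtain ⟨j₀, hj₀lt, hj₀⟩ := List.getElem_of_mem hf0l'
    have hj₀' : l'[j₀]? = some (f ⟨0, by omega⟩) := by
      rw [List.getElem?_eq_getElem hj₀lt, hj₀]
    have main : ∀ (k j : ℕ), (j₀ = j + k ∨ j = j₀ + k) →
        ∀ x, l'[j]? = some x → x ∈ l := by
      intro k
      induction k with
      | zero =>
        intro j hj x hx
        have hjj : j = j₀ := by omega
        subst hjj
        rw [hj₀'] at hx
        have := Option.some.inj hx
        rw [← this]
        exact hf0l
      | succ k ih =>
        intro j hj x hx
        rcases hj with hj | hj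
        · -- j + (k+1) = j₀ : go up from j via j+1
          have hjlt : j + 1 < l'.length := by
            have := (hq _ _ _ hj₀').1
            omega
          have hy : l'[j+1]? = some (l'[j+1]) := List.getElem?_eq_getElem hjlt
          have hyl : l'[j+1] ∈ l := ih (j+1) (Or.inl (by omega)) _ hy
          exact down j x _ hx hy hyl
        · -- j = j₀ + (k+1) : go up from j-1
          have hjlt : j < l'.length := (hq _ _ _ hx).1
          have hj1 : j₀ + k < l'.length := by omega
          have hx' : l'[j₀+k]? = some (l'[j₀+k]) := List.getElem?_eq_getElem hj1
          have hxl : l'[j₀+k] ∈ l := ih (j₀+k) (Or.inr rfl) _ hx'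
          have he : j₀ + k + 1 = j := by omega
          apply up (j₀+k) _ x hx' hxl
          rw [he]
          exact hx
    have hsubset : ∀ z ∈ l', z ∈ l := by
      intro z hz
      obtain ⟨j, hjlt, hj⟩ := List.getElem_of_mem hz
      have hj' : l'[j]? = some z := by rw [List.getElem?_eq_getElem hjlt, hj]
      rcases le_total j j₀ with h | h
      · exact main (j₀ - j) j (Or.inl (by omega)) z hj'
      · exact main (j - j₀) j (Or.inr (by omega)) z hj'
    have hlen' : l'.length ≤ l.length := by
      have h1 : l'.toFinset.card = l'.length := List.toFinset_card_of_nodup hnd'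
      have h2 : l.toFinset.card = l.length := List.toFinset_card_of_nodup hnd
      have h3 : l'.toFinset ⊆ l.toFinset := by
        intro z hz
        rw [List.mem_toFinset] at hz ⊢
        exact hsubset z hz
      have := Finset.card_le_card h3
      omega
    exact (hsub.eq_of_length_le hlen').symm
  refine ⟨l, ⟨⟨hzzl, hmaxzz⟩, by omega, ?_, hWhead, hWlast⟩⟩
  rw [hlen]
  exact even_two_mul n


lemma root_child_not_retic (hbin : D.IsBinary) {a : A} (hroot : D.IsRoot (D.tail a)) :
    ¬ D.IsRetic (D.head a) := by
  intro hret
  obtain ⟨rank, hrank⟩ := hbin.1.1.1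
  have huniq : ∀ w, D.IsRoot w → w = D.tail a := by
    obtain ⟨r₀, hr₀, hu⟩ := hbin.1.1.2.2.1
    intro w hw
    rw [hu w hw, ← hu (D.tail a) hroot]
  have hout1 : ∀ c, D.tail c = D.tail a → c = a := by
    intro c hc
    exact aux_unique (p := fun x => D.tail x = D.tail a) (le_of_eq hroot.2) hc rfl
  have hin : ∀ w, ¬ D.IsRoot w → ∃ c, D.head c = w := by
    intro w hw
    apply aux_exists (p := fun x => D.head x = w)
    show 1 ≤ D.indeg w
    rcases hbin.1.1.2.2.2 w with hh | hh | hh | hh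
    · exact absurd hh hw
    · rw [hh.1]
    · rw [hh.1]
    · have := hh.1; omega
  have key : ∀ (N : ℕ) (w : V), rank w ≤ N → ¬ D.IsRoot w →
      rank (D.head a) ≤ rank w := by
    intro N
    induction N with
    | zero =>
      intro w hw hnr
      obtain ⟨c, hc⟩ := hin w hnr
      by_cases hq : D.IsRoot (D.tail c)
      · have : D.tail c = D.tail a := huniq _ hq
        have hca : c = a := hout1 c this
        rw [← hc, hca]
      · exfalso
        have := hrank c
        rw [hc] at this
        omega
    | succ N ih =>
      intro w hw hnr
      obtain ⟨c, hc⟩ := hin w hnr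
      by_cases hq : D.IsRoot (D.tail c)
      · have : D.tail c = D.tail a := huniq _ hq
        have hca : c = a := hout1 c this
        rw [← hc, hca]
      · have h1 := hrank c
        rw [hc] at h1
        have h2 := ih (D.tail c) (by omega) hq
        omega
  obtain ⟨hb1, hb2⟩ := sgf_spec hbin hret
  have hpa : D.tail (D.sgf a) ≠ D.tail a := by
    intro h
    exact hb1 (hout1 _ h)
  have hpnr : ¬ D.IsRoot (D.tail (D.sgf a)) := by
    intro h
    exact hpa (huniq _ h)
  have h3 := key (rank (D.tail (D.sgf a))) _ le_rfl hpnr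
  have h4 := hrank (D.sgf a)
  rw [hb2] at h4
  omega

theorem treebased_of_nobad (hbin : D.IsBinary)
    (hnb : ¬ ZZAux.Bad (netSys D hbin) (Uset D)) : D.IsTreeBased := by
  obtain ⟨C, hCR, hUC, hCiff, hCcl⟩ :=
    ZZAux.sat (Rset D).card (netSys D hbin) (Uset D) le_rfl
      (fun a ha => mem_Rset.mpr (mem_Uset.mp ha).1)
      (fun a ha => tuf_none_of_retic_tail (mem_Uset.mp ha).2) hnb
  have hCiff2 : ∀ a ∈ Rset D, (a ∈ C ↔ D.sgf a ∉ C) := hCiff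
  have hCcl2 : ∀ a ∈ Rset D, ∀ b, D.tuf a = some b → a ∈ C ∨ b ∈ C := hCcl
  have hCR2 : C ⊆ Rset D := hCR
  have hCR' : ∀ a ∈ C, D.IsRetic (D.head a) := fun a ha => mem_Rset.mp (hCR2 ha)
  refine ⟨{a | ¬ D.IsRetic (D.head a)} ∪ ↑C, ?_, ?_, ?_⟩
  · intro a ha
    exact Or.inl ha
  · intro v hv
    -- two in-arcs
    have hcard : D.indeg v = 2 := hbin.2 v hv
    have hex : ∃ a, D.head a = v := by
      apply aux_exists (p := fun x => D.head x = v)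
      show 1 ≤ D.indeg v
      omega
    obtain ⟨a, ha⟩ := hex
    have haR : D.IsRetic (D.head a) := by rw [ha]; exact hv
    have haRs : a ∈ Rset D := mem_Rset.mpr haR
    have hsga : D.head (D.sgf a) = v := by rw [(sgf_spec hbin haR).2, ha]
    have huniqin : ∀ y, D.head y = v → y = a ∨ y = D.sgf a := by
      intro y hy
      apply in_arcs_pair hbin haR rfl (sgf_spec hbin haR).2 (Ne.symm (sgf_spec hbin haR).1)
      rw [hy, ← ha]
    have hone : ∀ x, x ∈ ({a : A | ¬ D.IsRetic (D.head a)} ∪ ↑C : Set A) ∧ D.head x = v →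
        x ∈ C := by
      rintro x ⟨hx | hx, hxv⟩
      · exfalso
        apply hx
        rw [hxv]
        exact hv
      · exact hx
    by_cases haC : a ∈ C
    · refine ⟨a, ⟨Or.inr haC, ha⟩, ?_⟩
      intro y hy
      have hyC : y ∈ C := hone y hy
      rcases huniqin y hy.2 with h | h
      · exact h
      · exfalso
        have := (hCiff2 a haRs).mp haC
        rw [← h] at this
        exact this hyC
    · have hsgaC : D.sgf a ∈ C := by
        by_contra h
        exact haC ((hCiff2 a haRs).mpr h)
      refine ⟨D.sgf a, ⟨Or.inr hsgaC, hsga⟩, ?_⟩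
      intro y hy
      have hyC : y ∈ C := hone y hy
      rcases huniqin y hy.2 with h | h
      · exact absurd (h ▸ hyC) haC
      · exact h
  · intro v hv
    obtain ⟨a, ha⟩ := nonleaf_exists_out hbin hv
    by_cases hh : D.IsRetic (D.head a)
    · rcases hbin.1.1.2.2.2 v with hc | hc | hc | hc
      · exfalso
        exact root_child_not_retic hbin (by rw [ha]; exact hc) hh
      · exact absurd hc hv
      · -- tree node : two out-arcs
        have hcard : D.outdeg v = 2 := hbin.1.2 v hc
        have hex2 : ∃ b, b ≠ a ∧ D.tail b = D.tail a := by
          have h1 : 1 < Fintype.card {x // D.tail x = v} := by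
            have : D.outdeg v = Fintype.card {x // D.tail x = v} := rfl
            omega
          obtain ⟨x, y, hxy⟩ := Fintype.one_lt_card_iff.mp h1
          by_cases hx : x.1 = a
          · refine ⟨y.1, ?_, by rw [y.2, ha]⟩
            intro hy
            exact hxy (Subtype.ext (hx.trans hy.symm))
          · exact ⟨x.1, hx, by rw [x.2, ha]⟩
        obtain ⟨b, hba, hbt⟩ := hex2
        by_cases hhb : D.IsRetic (D.head b)
        · have htufa : D.tuf a = some b := tuf_eq_some hbin hh hba hbt hhb
          rcases hCcl2 a (mem_Rset.mpr hh) b htufa with hc2 | hc2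
          · exact ⟨a, Or.inr hc2, ha⟩
          · exact ⟨b, Or.inr hc2, by rw [hbt, ha]⟩
        · exact ⟨b, Or.inl hhb, by rw [hbt, ha]⟩
      · -- reticulation : its unique out-arc is a unit
        have haU : a ∈ Uset D := by
          rw [mem_Uset]
          exact ⟨hh, by rw [ha]; exact hc⟩
        exact ⟨a, Or.inr (hUC haU), ha⟩
    · exact ⟨a, Or.inl hh, ha⟩

end NetProof
end MGraph

/-- A binary network is tree-based iff it has no W-fence. -/
theorem stmt4 {V A : Type} [Fintype V] [Fintype A] [DecidableEq V] [DecidableEq A]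
    (D : MGraph V A) (hbin : D.IsBinary) :
    D.IsTreeBased ↔ ∀ l : List A, ¬ D.IsWFence l := by
  constructor
  · intro htb l
    exact MGraph.not_wfence_of_treebased hbin htb l
  · intro hnf
    apply MGraph.treebased_of_nobad hbin
    intro hB
    obtain ⟨l, hl⟩ := MGraph.wfence_of_bad hbin hB
    exact hnf l hl
end

section
/- Let N be a binary tree-based network with an N-fence (a_1,...,a_k) of length k ≥ 3, where tail(a_1) is a reticulation, and for each odd index 2j−1 let c_{2j−1} denote the arc from head(a_{2j−1}) to its unique child. Then every cherry cover of N contains the reticulated cherry shapes {c_{2j−1}, a_{2j}, a_{2j+1}} for all j in [(k−1)/2]. -/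
open Classical

set_option linter.unusedSectionVars false

namespace MGraph
section Aux

variable {V A : Type} [Fintype V] [Fintype A] [DecidableEq V] [DecidableEq A] (D : MGraph V A)

lemma aux_three_le_indeg {v : V} {a b c : A} (ha : D.head a = v) (hb : D.head b = v)
    (hc : D.head c = v) (hab : a ≠ b) (hac : a ≠ c) (hbc : b ≠ c) : 3 ≤ D.indeg v := by
  have hcard : ({⟨a, ha⟩, ⟨b, hb⟩, ⟨c, hc⟩} : Finset {e : A // D.head e = v}).card = 3 := by
    rw [Finset.card_insert_of_notMem (by simp [hab, hac]),
        Finset.card_insert_of_notMem (by simp [hbc]), Finset.card_singleton]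
  exact hcard ▸ Finset.card_le_univ _

lemma aux_two_le_indeg {v : V} {a b : A} (ha : D.head a = v) (hb : D.head b = v)
    (hab : a ≠ b) : 2 ≤ D.indeg v := by
  have hcard : ({⟨a, ha⟩, ⟨b, hb⟩} : Finset {e : A // D.head e = v}).card = 2 := by
    rw [Finset.card_insert_of_notMem (by simp [hab]), Finset.card_singleton]
  exact hcard ▸ Finset.card_le_univ _

lemma aux_two_le_outdeg {v : V} {a b : A} (ha : D.tail a = v) (hb : D.tail b = v)
    (hab : a ≠ b) : 2 ≤ D.outdeg v := by
  have hcard : ({⟨a, ha⟩, ⟨b, hb⟩} : Finset {e : A // D.tail e = v}).card = 2 := by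
    rw [Finset.card_insert_of_notMem (by simp [hab]), Finset.card_singleton]
  exact hcard ▸ Finset.card_le_univ _

lemma aux_eq_or_eq_of_indeg_two {v : V} {a b m : A} (h2 : D.indeg v = 2)
    (ha : D.head a = v) (hb : D.head b = v) (hm : D.head m = v) (hab : a ≠ b) :
    m = a ∨ m = b := by
  by_contra h
  push_neg at h
  have h3 := D.aux_three_le_indeg ha hb hm hab (Ne.symm h.1) (Ne.symm h.2)
  omega

lemma aux_eq_or_eq_of_outdeg_two {v : V} {a b m : A} (h2 : D.outdeg v = 2)
    (ha : D.tail a = v) (hb : D.tail b = v) (hm : D.tail m = v) (hab : a ≠ b) :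
    m = a ∨ m = b := by
  by_contra h
  push_neg at h
  have hcard : ({⟨a, ha⟩, ⟨b, hb⟩, ⟨m, hm⟩} : Finset {e : A // D.tail e = v}).card = 3 := by
    rw [Finset.card_insert_of_notMem (by simp [hab, Ne.symm h.1]),
        Finset.card_insert_of_notMem (by simp [Ne.symm h.2]), Finset.card_singleton]
  have h3 : 3 ≤ D.outdeg v := hcard ▸ Finset.card_le_univ _
  omega

lemma aux_exists_of_outdeg_one {v : V} (h : D.outdeg v = 1) : ∃ a, D.tail a = v := by
  have hpos : 0 < Fintype.card {a : A // D.tail a = v} := by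
    have : Fintype.card {a : A // D.tail a = v} = D.outdeg v := rfl
    omega
  obtain ⟨⟨a, ha⟩⟩ := Fintype.card_pos_iff.mp hpos
  exact ⟨a, ha⟩

end Aux
end MGraph

/-- In a binary tree-based network, the reticulated cherry shapes
covering an N-fence (of length ≥ 3, written 0-based, starting at its reticulation
end, so heads pair as (0,1),(2,3),…) are present in every cherry cover:
for each t the shape {c, a(2t+1), a(2t+2)} where c is the outgoing arc of the
reticulation head(a(2t)). -/
theorem stmt5 {V A : Type} [Fintype V] [Fintype A] [DecidableEq V] [DecidableEq A]
    (D : MGraph V A) (hbin : D.IsBinary) (htb : D.IsTreeBased) (l : List A)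
    (hl : D.IsMaxZZ l) (hk : 3 ≤ l.length) (hodd : Odd l.length)
    (hfirst : ∀ x, l.head? = some x → D.IsRetic (D.tail x))
    (hlast : ∀ y, l.getLast? = some y → D.IsTreeNode (D.tail y))
    (P : Finset (Finset A)) (hP : D.IsCherryCover P) :
    ∀ (t : ℕ) (x y z c : A), l[2*t]? = some x → l[2*t+1]? = some y →
      l[2*t+2]? = some z → D.tail c = D.head x →
      ({c, y, z} : Finset A) ∈ P := by
  obtain ⟨⟨hphylo, hout2⟩, hin2⟩ := hbin
  obtain ⟨⟨rank, hrank⟩, hnp, hroot, hclass⟩ := hphylo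
  obtain ⟨hshapes, huniq, hnoroot⟩ := hP
  have hnodup := hl.1.2.1
  -- the orientation must be head-pairing first
  have horient : (∀ (i : ℕ) (x y : A), l[2*i]? = some x → l[2*i+1]? = some y →
        D.head x = D.head y) ∧
      (∀ (i : ℕ) (x y : A), l[2*i+1]? = some x → l[2*i+2]? = some y →
        D.tail x = D.tail y) := by
    rcases hl.1.2.2 with h | h
    · exact h
    · exfalso
      have h0 : 0 < l.length := by omega
      have h1 : 1 < l.length := by omega
      have hg0 : l[0]? = some (l[0]'h0) := List.getElem?_eq_getElem h0
      have hg1 : l[1]? = some (l[1]'h1) := List.getElem?_eq_getElem h1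
      have htt : D.tail (l[0]'h0) = D.tail (l[1]'h1) := h.1 0 _ _ hg0 hg1
      have hne01 : (l[0]'h0) ≠ (l[1]'h1) := by
        intro he; exact absurd (hnodup.getElem_inj_iff.mp he) (by omega)
      have hret := hfirst _ (by rw [List.head?_eq_getElem?]; exact hg0)
      have hret2 := hret.2
      have h2 := D.aux_two_le_outdeg rfl htt.symm hne01
      omega
  -- a reticulation at the head of two distinct arcs
  have hreticOf : ∀ (a b : A), a ≠ b → D.head a = D.head b → D.IsRetic (D.head a) := by
    intro a b hab hh
    have h2 := D.aux_two_le_indeg rfl hh.symm hab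
    rcases hclass (D.head a) with h | h | h | h
    · exact absurd h.1 (by omega)
    · exact absurd h.1 (by omega)
    · exact absurd h.1 (by omega)
    · exact h
  -- a tree node at the tail of two distinct arcs of the trail
  have htreeOf : ∀ (a b : A), a ≠ b → D.tail a = D.tail b → ¬ D.IsRootArc a →
      D.IsTreeNode (D.tail a) := by
    intro a b hab ht hnr
    have h2 := D.aux_two_le_outdeg rfl ht.symm hab
    rcases hclass (D.tail a) with h | h | h | h
    · exact absurd h hnr
    · exact absurd h.2 (by omega)
    · exact h
    · exact absurd h.2 (by omega)
  have hacyc : ∀ a : A, D.tail a ≠ D.head a := by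
    intro a he
    have := hrank a
    rw [he] at this
    exact lt_irrefl _ this
  -- main step: the shape covering c is {c,y,z} or an RC-shape with mid = x
  have main : ∀ (t : ℕ) (x y z c : A), l[2*t]? = some x → l[2*t+1]? = some y →
      l[2*t+2]? = some z → D.tail c = D.head x →
      (({c, y, z} : Finset A) ∈ P ∨
        (D.IsTreeNode (D.tail x) ∧ ∃ s ∈ P, c ∈ s ∧ x ∈ s)) := by
    intro t x y z c hx hy hz hc
    obtain ⟨hxlt, hxe⟩ := List.getElem?_eq_some_iff.mp hx
    obtain ⟨hylt, hye⟩ := List.getElem?_eq_some_iff.mp hy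
    obtain ⟨hzlt, hze⟩ := List.getElem?_eq_some_iff.mp hz
    have hxy : x ≠ y := by
      intro he; rw [← hxe, ← hye] at he
      exact absurd (hnodup.getElem_inj_iff.mp he) (by omega)
    have hyz : y ≠ z := by
      intro he; rw [← hye, ← hze] at he
      exact absurd (hnodup.getElem_inj_iff.mp he) (by omega)
    have hhxy : D.head x = D.head y := horient.1 t x y hx hy
    have htyz : D.tail y = D.tail z := horient.2 t y z hy hz
    have hv : D.IsRetic (D.head x) := hreticOf x y hxy hhxy
    have hvin : D.indeg (D.head x) = 2 := hin2 _ hv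
    have hcnr : ¬ D.IsRootArc c := by
      intro hr
      rw [MGraph.IsRootArc, hc] at hr
      have := hr.1
      omega
    obtain ⟨s, ⟨hsP, hcs⟩, hsu⟩ := huniq c hcnr
    rcases hshapes s hsP with ⟨a, b, hab, hs, htt, hhh⟩ | ⟨mid, bot, top, hbm, hbt, hmt, hs, hmb, hmtop, hrt, htn⟩
    · -- cherry shape: impossible since tail c is a reticulation
      exfalso
      rw [hs, Finset.mem_insert, Finset.mem_singleton] at hcs
      have hout1 : D.outdeg (D.tail c) = 1 := by rw [hc]; exact hv.2
      rcases hcs with hca | hcb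
      · subst hca
        have := D.aux_two_le_outdeg rfl htt.symm hab
        omega
      · subst hcb
        have := D.aux_two_le_outdeg rfl htt (Ne.symm hab)
        omega
    · -- RC shape
      rw [hs, Finset.mem_insert, Finset.mem_insert, Finset.mem_singleton] at hcs
      have hnotmid : ∀ e : A, c = e → D.tail mid = D.tail e → False := by
        intro e hce hme
        rw [← hce, hc] at hme
        have h1 : D.indeg (D.head x) = 1 := by rw [← hme]; exact htn.1
        omega
      rcases hcs with hcb | hcm | hct
      · -- c = bot
        subst hcb
        have hmidin : D.head mid = D.head x := by rw [hmb, hc]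
        rcases D.aux_eq_or_eq_of_indeg_two hvin rfl hhxy.symm hmidin hxy with hmx | hmy
        · -- mid = x : second alternative
          refine Or.inr ⟨?_, s, hsP, ?_, ?_⟩
          · rw [← hmx]; exact htn
          · rw [hs]; simp
          · rw [hs]; simp [← hmx]
        · -- mid = y : the shape is {c, y, z}
          have htny : D.IsTreeNode (D.tail y) := by rw [← hmy]; exact htn
          have houty : D.outdeg (D.tail y) = 2 := hout2 _ htny
          have htopy : D.tail top = D.tail y := by rw [← hmtop, hmy]
          rcases D.aux_eq_or_eq_of_outdeg_two houty rfl htyz.symm htopy hyz with h1 | h1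
          · exact absurd (hmy.trans h1.symm) hmt
          · left
            have hseq : s = ({c, y, z} : Finset A) := by rw [hs, hmy, h1]
            rw [← hseq]
            exact hsP
      · exact absurd (hnotmid mid hcm rfl) (fun h => h)
      · exact absurd (hnotmid top hct hmtop) (fun h => h)
  intro t
  induction t with
  | zero =>
    intro x y z c hx hy hz hc
    rcases main 0 x y z c hx hy hz hc with h | ⟨htn, _⟩
    · exact h
    · exfalso
      have hret := hfirst x (by rw [List.head?_eq_getElem?]; exact hx)
      have := htn.1
      have := hret.1
      omega
  | succ n ih =>
    intro x y z c hx hy hz hc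
    rcases main (n+1) x y z c hx hy hz hc with h | ⟨htn, s, hsP, hcs, hxs⟩
    · exact h
    · exfalso
      have hx' : l[2*n+2]? = some x := by
        have : 2*(n+1) = 2*n+2 := by ring
        rw [← this]; exact hx
      obtain ⟨hxlt, hxe⟩ := List.getElem?_eq_some_iff.mp hx'
      have h2n : 2*n < l.length := by omega
      have h2n1 : 2*n+1 < l.length := by omega
      have hg0 : l[2*n]? = some (l[2*n]'h2n) := List.getElem?_eq_getElem h2n
      have hg1 : l[2*n+1]? = some (l[2*n+1]'h2n1) := List.getElem?_eq_getElem h2n1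
      have hne01 : (l[2*n]'h2n) ≠ (l[2*n+1]'h2n1) := by
        intro he; exact absurd (hnodup.getElem_inj_iff.mp he) (by omega)
      have hne02 : (l[2*n]'h2n) ≠ x := by
        intro he; rw [← hxe] at he
        exact absurd (hnodup.getElem_inj_iff.mp he) (by omega)
      have hne12 : (l[2*n+1]'h2n1) ≠ x := by
        intro he; rw [← hxe] at he
        exact absurd (hnodup.getElem_inj_iff.mp he) (by omega)
      have hh01 : D.head (l[2*n]'h2n) = D.head (l[2*n+1]'h2n1) := horient.1 n _ _ hg0 hg1
      have hret' : D.IsRetic (D.head (l[2*n]'h2n)) := hreticOf _ _ hne01 hh01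
      obtain ⟨c', hc'⟩ := D.aux_exists_of_outdeg_one hret'.2
      have hprev : ({c', (l[2*n+1]'h2n1), x} : Finset A) ∈ P := ih _ _ _ c' hg0 hg1 hx' hc'
      have hxnr : ¬ D.IsRootArc x := by
        intro hr
        have := hr.1
        have := htn.1
        omega
      obtain ⟨s', ⟨_, _⟩, hsu'⟩ := huniq x hxnr
      have hseq : s = ({c', (l[2*n+1]'h2n1), x} : Finset A) := by
        rw [hsu' s ⟨hsP, hxs⟩, hsu' _ ⟨hprev, by simp⟩]
      rw [hseq, Finset.mem_insert, Finset.mem_insert, Finset.mem_singleton] at hcs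
      have ht12 : D.tail (l[2*n+1]'h2n1) = D.tail x := horient.2 n _ _ hg1 hx'
      rcases hcs with hcc | hc1 | hcx
      · -- c = c' : three arcs into one vertex
        subst hcc
        have hhx : D.head (l[2*n]'h2n) = D.head x := by rw [← hc', hc]
        have h3 := D.aux_three_le_indeg hhx (hh01.symm.trans hhx) rfl hne01 hne02 hne12
        have hvin : D.indeg (D.head x) = 2 := hin2 _ (hhx ▸ hret')
        omega
      · -- c = l[2n+1] : tail x = head x
        rw [hc1] at hc
        rw [ht12] at hc
        exact hacyc x hc
      · -- c = x : tail x = head x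
        rw [hcx] at hc
        exact hacyc x hc
end

section
/- Let N be a binary tree-based network and let M = (a_1,...,a_k) be an M-fence of length k ≥ 4, and for each even index 2j (j ≤ (k−2)/2) let c_{2j} be the arc from head(a_{2j}) to its child. Then there are exactly k/2 distinct ways to cover the arcs of M together with the arcs c_{2j} using cherry shapes and reticulated cherry shapes; moreover each such covering consists of exactly one cherry shape {a_m, a_{m+1}} and k/2 − 1 reticulated cherry shapes. -/
open Classical

namespace MGraph
variable {V A : Type} [Fintype V] [Fintype A] [DecidableEq V] [DecidableEq A]
variable {D : MGraph V A}

theorem indeg_two_le {w : V} {x y : A} (hx : D.head x = w) (hy : D.head y = w)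
    (hxy : x ≠ y) : 2 ≤ D.indeg w := by
  have h : (1 : ℕ) < Fintype.card {a : A // D.head a = w} :=
    Fintype.one_lt_card_iff.mpr ⟨⟨x, hx⟩, ⟨y, hy⟩, by simpa [Subtype.ext_iff] using hxy⟩
  exact h

theorem indeg_three_le {w : V} {x y z : A} (hx : D.head x = w) (hy : D.head y = w)
    (hz : D.head z = w) (hxy : x ≠ y) (hxz : x ≠ z) (hyz : y ≠ z) : 3 ≤ D.indeg w := by
  have h : (2 : ℕ) < Fintype.card {a : A // D.head a = w} :=
    Fintype.two_lt_card_iff.mpr ⟨⟨x, hx⟩, ⟨y, hy⟩, ⟨z, hz⟩,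
      by simpa [Subtype.ext_iff] using hxy, by simpa [Subtype.ext_iff] using hxz,
      by simpa [Subtype.ext_iff] using hyz⟩
  exact h

theorem outdeg_two_le {w : V} {x y : A} (hx : D.tail x = w) (hy : D.tail y = w)
    (hxy : x ≠ y) : 2 ≤ D.outdeg w := by
  have h : (1 : ℕ) < Fintype.card {a : A // D.tail a = w} :=
    Fintype.one_lt_card_iff.mpr ⟨⟨x, hx⟩, ⟨y, hy⟩, by simpa [Subtype.ext_iff] using hxy⟩
  exact h

theorem outdeg_three_le {w : V} {x y z : A} (hx : D.tail x = w) (hy : D.tail y = w)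
    (hz : D.tail z = w) (hxy : x ≠ y) (hxz : x ≠ z) (hyz : y ≠ z) : 3 ≤ D.outdeg w := by
  have h : (2 : ℕ) < Fintype.card {a : A // D.tail a = w} :=
    Fintype.two_lt_card_iff.mpr ⟨⟨x, hx⟩, ⟨y, hy⟩, ⟨z, hz⟩,
      by simpa [Subtype.ext_iff] using hxy, by simpa [Subtype.ext_iff] using hxz,
      by simpa [Subtype.ext_iff] using hyz⟩
  exact h

theorem exists_forall_tail_arc {w : V} (h : D.outdeg w = 1) :
    ∃ e, D.tail e = w ∧ ∀ e', D.tail e' = w → e' = e := by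
  have h1 : Fintype.card {a : A // D.tail a = w} = 1 := h
  obtain ⟨⟨e, he⟩, hu⟩ := Fintype.card_eq_one_iff.mp h1
  exact ⟨e, he, fun e' he' => congrArg Subtype.val (hu ⟨e', he'⟩)⟩

theorem card3 (x y z : A) (hxy : x ≠ y) (hxz : x ≠ z) (hyz : y ≠ z) :
    ({x, y, z} : Finset A).card = 3 := by
  rw [Finset.card_insert_of_notMem (by simp [hxy, hxz]),
    Finset.card_insert_of_notMem (by simp [hyz]), Finset.card_singleton]

end MGraph

/-- An M-fence of length k ≥ 4 of a binary tree-based network,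
together with the outgoing arcs of its reticulations, can be covered in exactly
k/2 ways, each consisting of one cherry shape on consecutive arcs and k/2 − 1
reticulated cherry shapes. -/
theorem stmt6 {V A : Type} [Fintype V] [Fintype A] [DecidableEq V] [DecidableEq A]
    (D : MGraph V A) (hbin : D.IsBinary) (htb : D.IsTreeBased) (l : List A)
    (hMF : D.IsMFence l) (hk4 : 4 ≤ l.length) :
    ∀ T : Set A,
      T = {e : A | e ∈ l ∨ ∃ x ∈ l, D.IsRetic (D.head x) ∧ D.tail e = D.head x} →
      {Q : Finset (Finset A) | D.CoversExactly D.IsTreeNode D.IsRetic T Q}.ncard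
          = l.length / 2 ∧
      ∀ Q : Finset (Finset A), D.CoversExactly D.IsTreeNode D.IsRetic T Q →
        (∃ (m : ℕ) (x y : A), l[m]? = some x ∧ l[m+1]? = some y ∧
          ({x, y} : Finset A) ∈ Q ∧ D.IsCherryShape {x, y}) ∧
        {s : Finset A | s ∈ Q ∧ D.IsCherryShape s}.ncard = 1 ∧
        {s : Finset A | s ∈ Q ∧ D.IsRCShape D.IsTreeNode D.IsRetic s}.ncard
          = l.length / 2 - 1 := by
  classical
  intro T hT
  subst hT
  obtain ⟨⟨⟨hacyc, hnopar, hroot, hclass⟩, hout2⟩, hin2⟩ := hbin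
  obtain ⟨hmax, heven, hncrown, htreetail⟩ := hMF
  have hzz := hmax.1
  have hmaxl := hmax.2
  obtain ⟨hne, hnodup, hpat⟩ := hzz
  obtain ⟨n, hk⟩ : ∃ n, l.length = 2 * n := by
    obtain ⟨t, ht⟩ := heven; exact ⟨t, by omega⟩
  have hn : l.length / 2 = n := by omega
  have hn2 : 2 ≤ n := by omega
  obtain ⟨d⟩ : Nonempty A := ⟨l.head hne⟩
  obtain ⟨a, haval⟩ : ∃ a : ℕ → A, ∀ (m : ℕ) (hm : m < l.length), a m = l[m]'hm :=
    ⟨fun m => l.getD m d, fun m hm => List.getD_eq_getElem l d hm⟩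
  -- basic list facts
  have hget : ∀ m, m < 2 * n → l[m]? = some (a m) := by
    intro m hm
    have hm' : m < l.length := by omega
    rw [List.getElem?_eq_getElem hm', haval m hm']
  have hinj : ∀ m m', m < 2 * n → m' < 2 * n → a m = a m' → m = m' := by
    intro m m' hm hm' h
    have h1 : m < l.length := by omega
    have h2 : m' < l.length := by omega
    rw [haval m h1, haval m' h2] at h
    exact (hnodup.getElem_inj_iff).mp h
  have hmem : ∀ m, m < 2 * n → a m ∈ l := by
    intro m hm
    have h1 : m < l.length := by omega
    rw [haval m h1]; exact List.getElem_mem h1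
  have hmemr : ∀ e, e ∈ l → ∃ m, m < 2 * n ∧ e = a m := by
    intro e he
    obtain ⟨m, hm, hme⟩ := List.mem_iff_getElem.mp he
    refine ⟨m, by omega, ?_⟩
    rw [haval m hm]; exact hme.symm
  have hhead? : l.head? = some (a 0) := by
    rw [List.head?_eq_getElem?]
    exact hget 0 (by omega)
  have hlast? : l.getLast? = some (a (2 * n - 1)) := by
    rw [List.getLast?_eq_getElem?, show l.length - 1 = 2*n-1 by omega]
    exact hget (2*n-1) (by omega)
  have hcrown : D.head (a 0) = D.head (a (2 * n - 1)) ∨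
      D.tail (a 0) = D.tail (a (2 * n - 1)) → False := by
    intro h
    apply hncrown
    refine ⟨hmax, hmax.1, hk4, heven, ?_⟩
    intro x y hx hy
    rw [hhead?] at hx
    rw [hlast?] at hy
    obtain rfl : a 0 = x := Option.some.inj hx
    obtain rfl : a (2 * n - 1) = y := Option.some.inj hy
    exact h
  have hnoext : ∀ e, ¬ D.IsZZ (e :: l) := by
    intro e hzz'
    have h := hmaxl _ hzz' (List.sublist_cons_self e l)
    have := congrArg List.length h
    simp at this
  have hnoext2 : ∀ e, ¬ D.IsZZ (l ++ [e]) := by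
    intro e hzz'
    have h := hmaxl _ hzz' (List.sublist_append_left l [e])
    have := congrArg List.length h
    simp at this
  -- orientation: the trail is "tail-first"
  have horient : (∀ i x y, l[2*i]? = some x → l[2*i+1]? = some y → D.tail x = D.tail y) ∧
      (∀ i x y, l[2*i+1]? = some x → l[2*i+2]? = some y → D.head x = D.head y) := by
    rcases hpat with ⟨h1, h2⟩ | h
    swap
    · exact h
    exfalso
    have ht0 : D.IsTreeNode (D.tail (a 0)) := htreetail _ (hmem 0 (by omega))
    have hcard : (1:ℕ) < Fintype.card {x : A // D.tail x = D.tail (a 0)} := by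
      have h2' : D.outdeg (D.tail (a 0)) = 2 := hout2 _ ht0
      have h3' : Fintype.card {x : A // D.tail x = D.tail (a 0)} = 2 := h2'
      omega
    obtain ⟨⟨b, hbt⟩, hbne⟩ := Fintype.exists_ne_of_one_lt_card hcard ⟨a 0, rfl⟩
    have hbne' : b ≠ a 0 := fun hh => hbne (Subtype.ext hh)
    by_cases hbl : b ∈ l
    · obtain ⟨m, hm, rfl⟩ := hmemr b hbl
      have hm0 : m ≠ 0 := fun hh => hbne' (by rw [hh])
      by_cases hml : m = 2*n-1
      · subst hml
        exact hcrown (Or.inr hbt.symm)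
      · rcases Nat.even_or_odd m with ⟨t, htm⟩ | ⟨t, htm⟩
        · subst htm
          have ht1 : 1 ≤ t := by omega
          have hpair := h2 (t-1) _ _ (hget (2*(t-1)+1) (by omega)) (hget (2*(t-1)+2) (by omega))
          have hidx1 : 2*(t-1)+2 = t+t := by omega
          rw [hidx1] at hpair
          have h3 := MGraph.outdeg_three_le (D := D) rfl hbt (hpair.trans hbt)
            (Ne.symm hbne') (fun hh => by have := hinj _ _ (by omega) (by omega) hh; omega)
            (fun hh => by have := hinj _ _ (by omega) (by omega) hh; omega)
          have h4 := hout2 _ ht0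
          omega
        · subst htm
          have hpair := h2 t _ _ (hget (2*t+1) (by omega)) (hget (2*t+2) (by omega))
          have h3 := MGraph.outdeg_three_le (D := D) rfl hbt (hpair.symm.trans hbt)
            (Ne.symm hbne') (fun hh => by have := hinj _ _ (by omega) (by omega) hh; omega)
            (fun hh => by have := hinj _ _ (by omega) (by omega) hh; omega)
          have h4 := hout2 _ ht0
          omega
    · apply hnoext b
      refine ⟨List.cons_ne_nil b l, List.nodup_cons.mpr ⟨hbl, hnodup⟩, Or.inr ⟨?_, ?_⟩⟩
      · intro i x y hx hy
        rcases Nat.eq_zero_or_pos i with rfl | hpos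
        · rw [show 2*0 = 0 by ring, List.getElem?_cons_zero] at hx
          rw [show 2*0+1 = 0+1 by ring, List.getElem?_cons_succ, hget 0 (by omega)] at hy
          obtain rfl := Option.some.inj hx
          obtain rfl := Option.some.inj hy
          exact hbt
        · obtain ⟨i', rfl⟩ : ∃ i', i = i'+1 := ⟨i-1, by omega⟩
          rw [show 2*(i'+1) = (2*i'+1)+1 by ring, List.getElem?_cons_succ] at hx
          rw [show 2*(i'+1)+1 = (2*i'+2)+1 by ring, List.getElem?_cons_succ] at hy
          exact h2 i' x y hx hy
      · intro i x y hx hy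
        rw [show 2*i+1 = (2*i)+1 by ring, List.getElem?_cons_succ] at hx
        rw [show 2*i+1+1 = (2*i+1)+1 by ring, List.getElem?_cons_succ] at hy
        exact h1 i x y hx hy
  have hta : ∀ i, 2*i+1 < 2*n → D.tail (a (2*i)) = D.tail (a (2*i+1)) :=
    fun i h => horient.1 i _ _ (hget _ (by omega)) (hget _ h)
  have hha : ∀ i, 2*i+2 < 2*n → D.head (a (2*i+1)) = D.head (a (2*i+2)) :=
    fun i h => horient.2 i _ _ (hget _ (by omega)) (hget _ h)
  have hinle : ∀ w, D.indeg w ≤ 2 := by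
    intro w
    rcases hclass w with h|h|h|h
    · have := h.1; omega
    · have := h.1; omega
    · have := h.1; omega
    · rw [hin2 w h]
  have houtle : ∀ w, D.outdeg w ≤ 2 := by
    intro w
    rcases hclass w with h|h|h|h
    · have := h.2; omega
    · have := h.2; omega
    · rw [hout2 w h]
    · have := h.2; omega
  have htailtree : ∀ m, m < 2*n → D.IsTreeNode (D.tail (a m)) :=
    fun m hm => htreetail _ (hmem m hm)
  -- interior arcs have a "head partner"
  have hpartner : ∀ m, 1 ≤ m → m ≤ 2*n - 2 → ∃ p, p < 2*n ∧ p ≠ m ∧ p ≠ 0 ∧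
      p ≠ 2*n-1 ∧ D.head (a p) = D.head (a m) := by
    intro m h1 h2
    rcases Nat.even_or_odd m with ⟨t, htm⟩ | ⟨t, htm⟩
    · subst htm
      have ht1 : 1 ≤ t := by omega
      refine ⟨2*(t-1)+1, by omega, by omega, by omega, by omega, ?_⟩
      have hp := hha (t-1) (by omega)
      rw [show 2*(t-1)+2 = t+t by omega] at hp
      exact hp
    · subst htm
      refine ⟨2*t+2, by omega, by omega, by omega, by omega, ?_⟩
      exact (hha t (by omega)).symm
  -- ends are not reticulations
  have hend0 : ¬ D.IsRetic (D.head (a 0)) := by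
    intro hr
    have hcard : (1:ℕ) < Fintype.card {x : A // D.head x = D.head (a 0)} := by
      have h2' : D.indeg (D.head (a 0)) = 2 := hin2 _ hr
      have h3' : Fintype.card {x : A // D.head x = D.head (a 0)} = 2 := h2'
      omega
    obtain ⟨⟨e, het⟩, hene⟩ := Fintype.exists_ne_of_one_lt_card hcard ⟨a 0, rfl⟩
    have hene' : e ≠ a 0 := fun hh => hene (Subtype.ext hh)
    by_cases hel : e ∈ l
    · obtain ⟨m, hm, rfl⟩ := hmemr e hel
      have hm0 : m ≠ 0 := fun hh => hene' (by rw [hh])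
      by_cases hml : m = 2*n-1
      · subst hml
        exact hcrown (Or.inl het.symm)
      · obtain ⟨p, hp1, hp2, hp3, hp4, hp5⟩ := hpartner m (by omega) (by omega)
        have h3 := MGraph.indeg_three_le (D := D) rfl het (hp5.trans het)
          (Ne.symm hene') (fun hh => by have := hinj _ _ (by omega) (by omega) hh; omega)
          (fun hh => by have := hinj _ _ (by omega) (by omega) hh; omega)
        have h4 := hin2 _ hr
        omega
    · apply hnoext e
      refine ⟨List.cons_ne_nil e l, List.nodup_cons.mpr ⟨hel, hnodup⟩, Or.inl ⟨?_, ?_⟩⟩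
      · intro i x y hx hy
        rcases Nat.eq_zero_or_pos i with rfl | hpos
        · rw [show 2*0 = 0 by ring, List.getElem?_cons_zero] at hx
          rw [show 2*0+1 = 0+1 by ring, List.getElem?_cons_succ, hget 0 (by omega)] at hy
          obtain rfl := Option.some.inj hx
          obtain rfl := Option.some.inj hy
          exact het
        · obtain ⟨i', rfl⟩ : ∃ i', i = i'+1 := ⟨i-1, by omega⟩
          rw [show 2*(i'+1) = (2*i'+1)+1 by ring, List.getElem?_cons_succ] at hx
          rw [show 2*(i'+1)+1 = (2*i'+2)+1 by ring, List.getElem?_cons_succ] at hy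
          exact horient.2 i' x y hx hy
      · intro i x y hx hy
        rw [show 2*i+1 = (2*i)+1 by ring, List.getElem?_cons_succ] at hx
        rw [show 2*i+1+1 = (2*i+1)+1 by ring, List.getElem?_cons_succ] at hy
        exact horient.1 i x y hx hy
  have hendl : ¬ D.IsRetic (D.head (a (2*n-1))) := by
    intro hr
    have hcard : (1:ℕ) < Fintype.card {x : A // D.head x = D.head (a (2*n-1))} := by
      have h2' : D.indeg (D.head (a (2*n-1))) = 2 := hin2 _ hr
      have h3' : Fintype.card {x : A // D.head x = D.head (a (2*n-1))} = 2 := h2'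
      omega
    obtain ⟨⟨e, het⟩, hene⟩ := Fintype.exists_ne_of_one_lt_card hcard ⟨a (2*n-1), rfl⟩
    have hene' : e ≠ a (2*n-1) := fun hh => hene (Subtype.ext hh)
    by_cases hel : e ∈ l
    · obtain ⟨m, hm, rfl⟩ := hmemr e hel
      have hml : m ≠ 2*n-1 := fun hh => hene' (by rw [hh])
      by_cases hm0 : m = 0
      · subst hm0
        exact hcrown (Or.inl het)
      · obtain ⟨p, hp1, hp2, hp3, hp4, hp5⟩ := hpartner m (by omega) (by omega)
        have h3 := MGraph.indeg_three_le (D := D) rfl het (hp5.trans het)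
          (Ne.symm hene') (fun hh => by have := hinj _ _ (by omega) (by omega) hh; omega)
          (fun hh => by have := hinj _ _ (by omega) (by omega) hh; omega)
        have h4 := hin2 _ hr
        omega
    · apply hnoext2 e
      refine ⟨by simp, ?_, Or.inr ⟨?_, ?_⟩⟩
      · refine List.Nodup.append hnodup (List.nodup_singleton e) ?_
        intro x hx hx'
        rw [List.mem_singleton] at hx'
        exact hel (hx' ▸ hx)
      · intro i x y hx hy
        by_cases hb : 2*i+1 < l.length
        · rw [List.getElem?_append_left (by omega)] at hx
          rw [List.getElem?_append_left hb] at hy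
          exact horient.1 i x y hx hy
        · exfalso
          have hlen : (l ++ [e]).length ≤ 2*i+1 := by
            simp only [List.length_append, List.length_singleton]
            omega
          rw [List.getElem?_eq_none hlen] at hy
          exact (Option.some_ne_none y) hy.symm
      · intro i x y hx hy
        by_cases hb : 2*i+2 < l.length
        · rw [List.getElem?_append_left (by omega)] at hx
          rw [List.getElem?_append_left hb] at hy
          exact horient.2 i x y hx hy
        · by_cases hb2 : 2*i+2 = 2*n
          · rw [List.getElem?_append_left (by omega), hget (2*i+1) (by omega)] at hx
            rw [List.getElem?_append_right (by omega), show 2*i+2 - l.length = 0 by omega,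
              List.getElem?_cons_zero] at hy
            obtain rfl := Option.some.inj hx
            obtain rfl := Option.some.inj hy
            rw [show 2*i+1 = 2*n-1 by omega]
            exact het.symm
          · exfalso
            have hlen : (l ++ [e]).length ≤ 2*i+2 := by
              simp only [List.length_append, List.length_singleton]
              omega
            rw [List.getElem?_eq_none hlen] at hy
            exact (Option.some_ne_none y) hy.symm
  -- the interior reticulations
  have hretic : ∀ i, i+1 < n → D.IsRetic (D.head (a (2*i+2))) := by
    intro i hi
    have hh := hha i (by omega)
    have h2 : 2 ≤ D.indeg (D.head (a (2*i+2))) :=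
      MGraph.indeg_two_le hh rfl (fun h => by have := hinj _ _ (by omega) (by omega) h; omega)
    rcases hclass (D.head (a (2*i+2))) with h|h|h|h
    · exact absurd h.1 (by omega)
    · exact absurd h.1 (by omega)
    · exact absurd h.1 (by omega)
    · exact h
  have hinarc : ∀ i, i+1 < n → ∀ e, D.head e = D.head (a (2*i+2)) →
      e = a (2*i+1) ∨ e = a (2*i+2) := by
    intro i hi e he
    by_contra hcon
    push_neg at hcon
    have h3 := MGraph.indeg_three_le he (hha i (by omega)) rfl hcon.1 hcon.2
      (fun h => by have := hinj _ _ (by omega) (by omega) h; omega)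
    have h2 := hin2 _ (hretic i hi)
    omega
  have houtarc : ∀ i, i < n → ∀ e, D.tail e = D.tail (a (2*i)) →
      e = a (2*i) ∨ e = a (2*i+1) := by
    intro i hi e he
    by_contra hcon
    push_neg at hcon
    have h3 := MGraph.outdeg_three_le he rfl ((hta i (by omega)).symm) hcon.1 hcon.2
      (fun h => by have := hinj _ _ (by omega) (by omega) h; omega)
    have h2 := hout2 _ (htailtree (2*i) (by omega))
    omega
  -- the reticulation child arcs
  have hcex : ∀ i, i+1 < n → ∃ e, D.tail e = D.head (a (2*i+2)) ∧
      ∀ e', D.tail e' = D.head (a (2*i+2)) → e' = e :=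
    fun i hi => MGraph.exists_forall_tail_arc (hretic i hi).2
  obtain ⟨c, hc⟩ : ∃ c : ℕ → A, ∀ i, i+1 < n →
      D.tail (c (i+1)) = D.head (a (2*i+2)) ∧
      ∀ e, D.tail e = D.head (a (2*i+2)) → e = c (i+1) := by
    refine ⟨fun j => if h : 1 ≤ j ∧ j < n then (hcex (j-1) (by omega)).choose else a 0, ?_⟩
    intro i hi
    have h : 1 ≤ i+1 ∧ i+1 < n := ⟨by omega, hi⟩
    simp only [dif_pos h]
    exact (hcex (i+1-1) (by omega)).choose_spec
  have hcne : ∀ i, i+1 < n → ∀ m, m < 2*n → c (i+1) ≠ a m := by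
    intro i hi m hm h
    have h1 := (hc i hi).1
    rw [h] at h1
    have ht := htailtree m hm
    rw [h1] at ht
    have hr := hretic i hi
    have := ht.1
    have := hr.1
    omega
  have hcinj : ∀ i, i+1 < n → ∀ j, j+1 < n → c (i+1) = c (j+1) → i = j := by
    intro i hi j hj h
    have h1 := (hc i hi).1
    rw [h] at h1
    have h2 := (hc j hj).1
    have hhd : D.head (a (2*i+2)) = D.head (a (2*j+2)) := h1.symm.trans h2
    rcases hinarc j hj (a (2*i+2)) hhd with h'|h'
    · have := hinj _ _ (by omega) (by omega) h'; omega
    · have := hinj _ _ (by omega) (by omega) h'; omega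
  -- the shapes
  obtain ⟨CC, hCCdef⟩ : ∃ CC : ℕ → Finset A, ∀ i, CC i = {a (2*i), a (2*i+1)} :=
    ⟨_, fun i => rfl⟩
  obtain ⟨SP, hSPdef⟩ : ∃ SP : ℕ → Finset A, ∀ i, SP i = {c (i+1), a (2*i+1), a (2*i)} :=
    ⟨_, fun i => rfl⟩
  obtain ⟨SM, hSMdef⟩ : ∃ SM : ℕ → Finset A, ∀ i, SM i = {c i, a (2*i), a (2*i+1)} :=
    ⟨_, fun i => rfl⟩
  have hSMsucc : ∀ j, SM (j+1) = {c (j+1), a (2*j+2), a (2*j+3)} := by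
    intro j
    rw [hSMdef, show 2*(j+1)+1 = 2*j+3 by ring, show 2*(j+1) = 2*j+2 by ring]
  obtain ⟨f, hfdef⟩ : ∃ f : ℕ → ℕ → Finset A, ∀ m i,
      f m i = if i < m then SP i else if i = m then CC i else SM i :=
    ⟨_, fun m i => rfl⟩
  obtain ⟨Qm, hQmdef⟩ : ∃ Qm : ℕ → Finset (Finset A), ∀ m,
      Qm m = (Finset.range n).image (f m) :=
    ⟨_, fun m => rfl⟩
  -- membership index lemmas
  have hmemCC : ∀ i, i < n → ∀ i', i' < n → ∀ e, (e = a (2*i) ∨ e = a (2*i+1)) →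
      e ∈ CC i' → i = i' := by
    intro i hi i' hi' e hor he
    rw [hCCdef] at he
    simp only [Finset.mem_insert, Finset.mem_singleton] at he
    rcases hor with rfl | rfl <;> rcases he with h | h <;>
      · have := hinj _ _ (by omega) (by omega) h; omega
  have hmemSP : ∀ i, i < n → ∀ i', i'+1 < n → ∀ e, (e = a (2*i) ∨ e = a (2*i+1)) →
      e ∈ SP i' → i = i' := by
    intro i hi i' hi' e hor he
    rw [hSPdef] at he
    simp only [Finset.mem_insert, Finset.mem_singleton] at he
    rcases hor with rfl | rfl <;> rcases he with h | h | h <;>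
      first
        | exact absurd h.symm (hcne i' hi' _ (by omega))
        | (have := hinj _ _ (by omega) (by omega) h; omega)
  have hmemSM : ∀ i, i < n → ∀ j, j+1 < n → ∀ e, (e = a (2*i) ∨ e = a (2*i+1)) →
      e ∈ SM (j+1) → i = j+1 := by
    intro i hi j hj e hor he
    rw [hSMsucc] at he
    simp only [Finset.mem_insert, Finset.mem_singleton] at he
    rcases hor with rfl | rfl <;> rcases he with h | h | h <;>
      first
        | exact absurd h.symm (hcne j hj _ (by omega))
        | (have := hinj _ _ (by omega) (by omega) h; omega)
  have hcmemCC : ∀ j, j+1 < n → ∀ i', i' < n → c (j+1) ∉ CC i' := by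
    intro j hj i' hi' he
    rw [hCCdef] at he
    simp only [Finset.mem_insert, Finset.mem_singleton] at he
    rcases he with h | h
    · exact absurd h (hcne j hj _ (by omega))
    · exact absurd h (hcne j hj _ (by omega))
  have hcmemSP : ∀ j, j+1 < n → ∀ i', i'+1 < n → c (j+1) ∈ SP i' → j = i' := by
    intro j hj i' hi' he
    rw [hSPdef] at he
    simp only [Finset.mem_insert, Finset.mem_singleton] at he
    rcases he with h | h | h
    · exact hcinj j hj i' hi' h
    · exact absurd h (hcne j hj _ (by omega))
    · exact absurd h (hcne j hj _ (by omega))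
  have hcmemSM : ∀ j, j+1 < n → ∀ j', j'+1 < n → c (j+1) ∈ SM (j'+1) → j = j' := by
    intro j hj j' hj' he
    rw [hSMsucc] at he
    simp only [Finset.mem_insert, Finset.mem_singleton] at he
    rcases he with h | h | h
    · exact hcinj j hj j' hj' h
    · exact absurd h (hcne j hj _ (by omega))
    · exact absurd h (hcne j hj _ (by omega))
  -- cards and shape distinctness
  have hCCcard : ∀ i, i < n → (CC i).card = 2 := by
    intro i hi
    rw [hCCdef]
    exact Finset.card_pair (fun h => by have := hinj _ _ (by omega) (by omega) h; omega)
  have hSPcard : ∀ i, i+1 < n → (SP i).card = 3 := by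
    intro i hi
    rw [hSPdef]
    exact MGraph.card3 _ _ _ (hcne i hi _ (by omega)) (hcne i hi _ (by omega))
      (fun h => by have := hinj _ _ (by omega) (by omega) h; omega)
  have hSMcard : ∀ j, j+1 < n → (SM (j+1)).card = 3 := by
    intro j hj
    rw [hSMsucc]
    exact MGraph.card3 _ _ _ (hcne j hj _ (by omega)) (hcne j hj _ (by omega))
      (fun h => by have := hinj _ _ (by omega) (by omega) h; omega)
  have hchcard : ∀ s : Finset A, D.IsCherryShape s → s.card = 2 := by
    rintro s ⟨x, y, hxy, rfl, -, -⟩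
    exact Finset.card_pair hxy
  have hrccard : ∀ s : Finset A, D.IsRCShape D.IsTreeNode D.IsRetic s → s.card = 3 := by
    rintro s ⟨mid, bot, top, h1, h2, h3, rfl, -, -, -, -⟩
    exact MGraph.card3 _ _ _ h1 h2 h3
  have hCCneSP : ∀ i i', i < n → i'+1 < n → CC i ≠ SP i' := by
    intro i i' hi hi' h
    have h1 := hCCcard i hi
    rw [h, hSPcard i' hi'] at h1
    omega
  have hCCneSM : ∀ i j, i < n → j+1 < n → CC i ≠ SM (j+1) := by
    intro i j hi hj h
    have h1 := hCCcard i hi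
    rw [h, hSMcard j hj] at h1
    omega
  have hSPneSM : ∀ i j, i+1 < n → j+1 < n → SP i ≠ SM (j+1) := by
    intro i j hi hj h
    have hmem1 : c (i+1) ∈ SM (j+1) := by
      rw [← h, hSPdef]; simp
    rw [hSMsucc] at hmem1
    simp only [Finset.mem_insert, Finset.mem_singleton] at hmem1
    rcases hmem1 with h1 | h1 | h1
    · have hij := hcinj i hi j hj h1
      subst hij
      have hmem2 : a (2*i) ∈ SM (i+1) := by rw [← h, hSPdef]; simp
      rw [hSMsucc] at hmem2
      simp only [Finset.mem_insert, Finset.mem_singleton] at hmem2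
      rcases hmem2 with h2 | h2 | h2
      · exact absurd h2.symm (hcne i hi _ (by omega))
      · have := hinj _ _ (by omega) (by omega) h2; omega
      · have := hinj _ _ (by omega) (by omega) h2; omega
    · exact absurd h1 (hcne i hi _ (by omega))
    · exact absurd h1 (hcne i hi _ (by omega))
  -- shapes are cherries / reticulated cherries
  have hCCch : ∀ i, i < n → D.IsCherryShape (CC i) := by
    intro i hi
    refine ⟨a (2*i), a (2*i+1), fun h => by have := hinj _ _ (by omega) (by omega) h; omega,
      hCCdef i, hta i (by omega), fun h => ?_⟩
    have h2 := hnopar _ _ (hta i (by omega)) h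
    have := hinj _ _ (by omega) (by omega) h2
    omega
  have hSPrc : ∀ i, i+1 < n → D.IsRCShape D.IsTreeNode D.IsRetic (SP i) := by
    intro i hi
    refine ⟨a (2*i+1), c (i+1), a (2*i), hcne i hi _ (by omega), hcne i hi _ (by omega),
      fun h => by have := hinj _ _ (by omega) (by omega) h; omega, hSPdef i, ?_, ?_, ?_, ?_⟩
    · rw [(hc i hi).1]; exact hha i (by omega)
    · exact (hta i (by omega)).symm
    · rw [(hc i hi).1]; exact hretic i hi
    · exact htailtree _ (by omega)
  have hSMrc : ∀ j, j+1 < n → D.IsRCShape D.IsTreeNode D.IsRetic (SM (j+1)) := by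
    intro j hj
    refine ⟨a (2*j+2), c (j+1), a (2*j+3), hcne j hj _ (by omega), hcne j hj _ (by omega),
      fun h => by have := hinj _ _ (by omega) (by omega) h; omega, hSMsucc j, ?_, ?_, ?_, ?_⟩
    · exact (hc j hj).1.symm
    · have h5 := hta (j+1) (by omega)
      rw [show 2*(j+1)+1 = 2*j+3 by ring, show 2*(j+1) = 2*j+2 by ring] at h5
      exact h5
    · rw [(hc j hj).1]; exact hretic j hj
    · exact htailtree _ (by omega)
  -- membership in T
  have hTa : ∀ m, m < 2*n →
      a m ∈ {e : A | e ∈ l ∨ ∃ x ∈ l, D.IsRetic (D.head x) ∧ D.tail e = D.head x} :=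
    fun m hm => Or.inl (hmem m hm)
  have hTc : ∀ j, j+1 < n →
      c (j+1) ∈ {e : A | e ∈ l ∨ ∃ x ∈ l, D.IsRetic (D.head x) ∧ D.tail e = D.head x} :=
    fun j hj => Or.inr ⟨a (2*j+2), hmem _ (by omega), hretic j hj, (hc j hj).1⟩
  have hTdec : ∀ e, e ∈ {e : A | e ∈ l ∨ ∃ x ∈ l, D.IsRetic (D.head x) ∧ D.tail e = D.head x} →
      (∃ m, m < 2*n ∧ e = a m) ∨ (∃ j, j+1 < n ∧ e = c (j+1)) := by
    intro e he
    rcases he with hel | ⟨x, hxl, hxr, hxt⟩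
    · obtain ⟨m, hm, rfl⟩ := hmemr e hel
      exact Or.inl ⟨m, hm, rfl⟩
    · obtain ⟨m, hm, rfl⟩ := hmemr x hxl
      rcases eq_or_ne m 0 with rfl | hm0
      · exact absurd hxr hend0
      rcases eq_or_ne m (2*n-1) with rfl | hml
      · exact absurd hxr hendl
      rcases Nat.even_or_odd m with ⟨t, htm⟩ | ⟨t, htm⟩
      · obtain ⟨j, rfl⟩ : ∃ j, m = 2*j+2 := ⟨t-1, by omega⟩
        exact Or.inr ⟨j, by omega, (hc j (by omega)).2 e hxt⟩
      · subst htm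
        have hj : t + 1 < n := by omega
        have hh := hha t (by omega)
        exact Or.inr ⟨t, hj, (hc t hj).2 e (hxt.trans hh)⟩
  -- every Qm m is a cover
  have hmemaf : ∀ m' i, m' < n → i < n → a (2*i) ∈ f m' i ∧ a (2*i+1) ∈ f m' i := by
    intro m' i hm' hi
    rw [hfdef]
    split_ifs with h1 h2
    · rw [hSPdef]; constructor <;> simp
    · rw [hCCdef]; constructor <;> simp
    · obtain ⟨j, rfl⟩ : ∃ j, i = j+1 := ⟨i-1, by omega⟩
      rw [hSMsucc]
      constructor
      · rw [show 2*(j+1) = 2*j+2 by ring]; simp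
      · rw [show 2*(j+1)+1 = 2*j+3 by ring]; simp
  have hidx : ∀ i, i < n → ∀ i', i' < n → ∀ m', m' < n → ∀ e,
      (e = a (2*i) ∨ e = a (2*i+1)) → e ∈ f m' i' → i = i' := by
    intro i hi i' hi' m' hm' e hor he
    rw [hfdef] at he
    split_ifs at he with h1 h2
    · exact hmemSP i hi i' (by omega) e hor he
    · exact hmemCC i hi i' hi' e hor he
    · obtain ⟨j, rfl⟩ : ∃ j, i' = j + 1 := ⟨i' - 1, by omega⟩
      exact hmemSM i hi j (by omega) e hor he
  have hcover : ∀ m, m < n → D.CoversExactly D.IsTreeNode D.IsRetic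
      {e : A | e ∈ l ∨ ∃ x ∈ l, D.IsRetic (D.head x) ∧ D.tail e = D.head x} (Qm m) := by
    intro m hm
    refine ⟨?_, ?_, ?_⟩
    · intro s hs
      rw [hQmdef] at hs
      obtain ⟨i, hi, rfl⟩ := Finset.mem_image.mp hs
      rw [Finset.mem_range] at hi
      rw [hfdef]
      split_ifs with h1 h2
      · exact Or.inr (hSPrc i (by omega))
      · exact Or.inl (hCCch i hi)
      · obtain ⟨j, rfl⟩ : ∃ j, i = j+1 := ⟨i-1, by omega⟩
        exact Or.inr (hSMrc j (by omega))
    · intro s hs e he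
      rw [hQmdef] at hs
      obtain ⟨i, hi, rfl⟩ := Finset.mem_image.mp hs
      rw [Finset.mem_range] at hi
      rw [hfdef] at he
      split_ifs at he with h1 h2
      · rw [hSPdef] at he
        simp only [Finset.mem_insert, Finset.mem_singleton] at he
        rcases he with rfl | rfl | rfl
        · exact hTc i (by omega)
        · exact hTa _ (by omega)
        · exact hTa _ (by omega)
      · rw [hCCdef] at he
        simp only [Finset.mem_insert, Finset.mem_singleton] at he
        rcases he with rfl | rfl
        · exact hTa _ (by omega)
        · exact hTa _ (by omega)
      · obtain ⟨j, rfl⟩ : ∃ j, i = j+1 := ⟨i-1, by omega⟩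
        rw [hSMsucc] at he
        simp only [Finset.mem_insert, Finset.mem_singleton] at he
        rcases he with rfl | rfl | rfl
        · exact hTc j (by omega)
        · exact hTa _ (by omega)
        · exact hTa _ (by omega)
    · intro e he
      rcases hTdec e he with ⟨m0, hm0, rfl⟩ | ⟨j, hj, rfl⟩
      · obtain ⟨i, hi, hor⟩ : ∃ i, i < n ∧ (a m0 = a (2*i) ∨ a m0 = a (2*i+1)) := by
          rcases Nat.even_or_odd m0 with ⟨t, ht⟩ | ⟨t, ht⟩
          · exact ⟨t, by omega, Or.inl (by rw [show m0 = 2*t by omega])⟩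
          · exact ⟨t, by omega, Or.inr (by rw [show m0 = 2*t+1 by omega])⟩
        refine ⟨f m i, ⟨?_, ?_⟩, ?_⟩
        · rw [hQmdef]; exact Finset.mem_image.mpr ⟨i, Finset.mem_range.mpr hi, rfl⟩
        · rcases hor with h | h
          · rw [h]; exact (hmemaf m i hm hi).1
          · rw [h]; exact (hmemaf m i hm hi).2
        · rintro σ ⟨hσQ, hσe⟩
          rw [hQmdef] at hσQ
          obtain ⟨i', hi', rfl⟩ := Finset.mem_image.mp hσQ
          rw [Finset.mem_range] at hi'
          have hii := hidx i hi i' hi' m hm (a m0) hor hσe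
          rw [hii]
      · by_cases hjm : j < m
        · refine ⟨f m j, ⟨?_, ?_⟩, ?_⟩
          · rw [hQmdef]; exact Finset.mem_image.mpr ⟨j, Finset.mem_range.mpr (by omega), rfl⟩
          · rw [hfdef, if_pos hjm, hSPdef]; simp
          · rintro σ ⟨hσQ, hσe⟩
            rw [hQmdef] at hσQ
            obtain ⟨i', hi', rfl⟩ := Finset.mem_image.mp hσQ
            rw [Finset.mem_range] at hi'
            have key : i' = j := by
              rw [hfdef] at hσe
              split_ifs at hσe with h1 h2
              · exact (hcmemSP j hj i' (by omega) hσe).symm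
              · exact absurd hσe (hcmemCC j hj i' hi')
              · obtain ⟨j', rfl⟩ : ∃ j', i' = j'+1 := ⟨i'-1, by omega⟩
                have := hcmemSM j hj j' (by omega) hσe
                omega
            rw [key]
        · refine ⟨f m (j+1), ⟨?_, ?_⟩, ?_⟩
          · rw [hQmdef]; exact Finset.mem_image.mpr ⟨j+1, Finset.mem_range.mpr (by omega), rfl⟩
          · rw [hfdef, if_neg (by omega), if_neg (by omega), hSMsucc]; simp
          · rintro σ ⟨hσQ, hσe⟩
            rw [hQmdef] at hσQ
            obtain ⟨i', hi', rfl⟩ := Finset.mem_image.mp hσQ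
            rw [Finset.mem_range] at hi'
            have key : i' = j+1 := by
              rw [hfdef] at hσe
              split_ifs at hσe with h1 h2
              · have := hcmemSP j hj i' (by omega) hσe
                omega
              · exact absurd hσe (hcmemCC j hj i' hi')
              · obtain ⟨j', rfl⟩ : ∃ j', i' = j'+1 := ⟨i'-1, by omega⟩
                have := hcmemSM j hj j' (by omega) hσe
                omega
            rw [key]
  -- every cover is some Qm m
  have huniqQ : ∀ Q : Finset (Finset A), D.CoversExactly D.IsTreeNode D.IsRetic
      {e : A | e ∈ l ∨ ∃ x ∈ l, D.IsRetic (D.head x) ∧ D.tail e = D.head x} Q →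
      ∃ m, m < n ∧ Q = Qm m := by
    intro Q hQ
    obtain ⟨hQ1, hQ2, hQ3⟩ := hQ
    have hcls : ∀ σ, σ ∈ Q → (∃ i, i < n ∧ σ = CC i) ∨
        (∃ i, i+1 < n ∧ (σ = SP i ∨ σ = SM (i+1))) := by
      intro σ hσ
      rcases hQ1 σ hσ with hch | hrc
      · obtain ⟨x, y, hxy, rfl, htl, hhd⟩ := hch
        have hxT := hQ2 _ hσ x (by simp)
        rcases hTdec x hxT with ⟨mx, hmx, rfl⟩ | ⟨jx, hjx, rfl⟩
        · rcases Nat.even_or_odd mx with ⟨t, htt⟩ | ⟨t, htt⟩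
          · subst htt
            have hti : t < n := by omega
            have hy := houtarc t hti y (by rw [show 2*t = t+t by ring]; exact htl.symm)
            rcases hy with rfl | rfl
            · exact absurd (by rw [show 2*t = t+t by ring]) hxy
            · refine Or.inl ⟨t, hti, ?_⟩
              rw [hCCdef, show 2*t = t+t by ring]
          · subst htt
            have hti : t < n := by omega
            have hy := houtarc t hti y (htl.symm.trans (hta t (by omega)).symm)
            rcases hy with rfl | rfl
            · refine Or.inl ⟨t, hti, ?_⟩
              rw [hCCdef]
              exact Finset.pair_comm _ _
            · exact absurd rfl hxy
        · have hy : y = c (jx+1) := (hc jx hjx).2 y (by rw [← htl]; exact (hc jx hjx).1)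
          exact absurd hy.symm hxy
      · obtain ⟨mid, bot, top, h1, h2, h3, rfl, hmb, hmt, hrt, htn⟩ := hrc
        have hbT := hQ2 _ hσ bot (by simp)
        rcases hTdec bot hbT with ⟨mb, hmb', rfl⟩ | ⟨j, hj, rfl⟩
        · have ht1 := (htailtree mb hmb').1
          have ht2 := hrt.1
          omega
        · have hmid : mid = a (2*j+1) ∨ mid = a (2*j+2) := by
            apply hinarc j hj
            rw [hmb, (hc j hj).1]
          rcases hmid with rfl | rfl
          · have htop := houtarc j (by omega) top
              (hmt.symm.trans (hta j (by omega)).symm)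
            rcases htop with rfl | rfl
            · exact Or.inr ⟨j, hj, Or.inl (by rw [hSPdef])⟩
            · exact absurd rfl h3
          · have h2j : 2*(j+1) = 2*j+2 := by ring
            have htop := houtarc (j+1) (by omega) top (by rw [h2j]; exact hmt.symm)
            rcases htop with rfl | rfl
            · exact absurd (by rw [h2j]) h3
            · refine Or.inr ⟨j, hj, Or.inr ?_⟩
              rw [hSMsucc, show 2*(j+1)+1 = 2*j+3 by ring]
    have hsex : ∀ i, i < n → ∃ σ, (σ ∈ Q ∧ a (2*i) ∈ σ) ∧
        ∀ σ', σ' ∈ Q → a (2*i) ∈ σ' → σ' = σ := by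
      intro i hi
      obtain ⟨σ, h1, h2⟩ := hQ3 (a (2*i)) (hTa _ (by omega))
      exact ⟨σ, h1, fun σ' hm1 hm2 => h2 σ' ⟨hm1, hm2⟩⟩
    obtain ⟨s, hs⟩ : ∃ s : ℕ → Finset A, ∀ i, i < n → ((s i ∈ Q ∧ a (2*i) ∈ s i) ∧
        ∀ σ', σ' ∈ Q → a (2*i) ∈ σ' → σ' = s i) := by
      refine ⟨fun i => if h : i < n then (hsex i h).choose else ∅, fun i hi => ?_⟩
      simp only [dif_pos hi]
      exact (hsex i hi).choose_spec
    have hsQ : ∀ i, i < n → s i ∈ Q := fun i hi => ((hs i hi).1).1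
    have hsm : ∀ i, i < n → a (2*i) ∈ s i := fun i hi => ((hs i hi).1).2
    have hsu : ∀ i, i < n → ∀ σ', σ' ∈ Q → a (2*i) ∈ σ' → σ' = s i := fun i hi => (hs i hi).2
    have hA : ∀ i, i < n → s i = CC i ∨ (∃ j, i = j+1 ∧ j+1 < n ∧ s i = SM (j+1)) ∨
        (i+1 < n ∧ s i = SP i) := by
      intro i hi
      rcases hcls (s i) (hsQ i hi) with ⟨i', hi', heq⟩ | ⟨i', hi', heq | heq⟩
      · have hii := hmemCC i hi i' hi' _ (Or.inl rfl) (heq ▸ hsm i hi)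
        subst hii
        exact Or.inl heq
      · have hii := hmemSP i hi i' hi' _ (Or.inl rfl) (heq ▸ hsm i hi)
        subst hii
        exact Or.inr (Or.inr ⟨hi', heq⟩)
      · have hii := hmemSM i hi i' hi' _ (Or.inl rfl) (heq ▸ hsm i hi)
        exact Or.inr (Or.inl ⟨i', hii, hi', heq⟩)
    have hB : ∀ j, j+1 < n → ((s (j+1) = SM (j+1)) ↔ ¬ (s j = SP j)) := by
      intro j hj
      obtain ⟨σ, ⟨hσQ, hσc⟩, hσu⟩ := hQ3 (c (j+1)) (hTc j hj)
      have hσcase : σ = SP j ∨ σ = SM (j+1) := by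
        rcases hcls σ hσQ with ⟨i', hi', rfl⟩ | ⟨i', hi', rfl | rfl⟩
        · exact absurd hσc (hcmemCC j hj i' hi')
        · have hji := hcmemSP j hj i' hi' hσc
          exact Or.inl (by rw [hji])
        · have hji := hcmemSM j hj i' hi' hσc
          exact Or.inr (by rw [hji])
      rcases hσcase with rfl | rfl
      · have hsj : s j = SP j := (hsu j (by omega) _ hσQ (by rw [hSPdef]; simp)).symm
        constructor
        · intro hsm1
          exfalso
          have hz1 : SM (j+1) ∈ Q := hsm1 ▸ hsQ (j+1) hj
          have hz2 : SM (j+1) = SP j := hσu _ ⟨hz1, by rw [hSMsucc]; simp⟩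
          exact hSPneSM j j (by omega) hj hz2.symm
        · intro hns
          exact absurd hsj hns
      · have hsj1 : s (j+1) = SM (j+1) := by
          refine (hsu (j+1) hj _ hσQ ?_).symm
          rw [show 2*(j+1) = 2*j+2 by ring, hSMsucc]
          simp
        have hnsp : ¬ (s j = SP j) := by
          intro hsp
          have hz1 : SP j ∈ Q := hsp ▸ hsQ j (by omega)
          have hz2 : SP j = SM (j+1) := hσu _ ⟨hz1, by rw [hSPdef]; simp⟩
          exact hSPneSM j j (by omega) hj hz2
        exact iff_of_true hsj1 hnsp
    have hD : ∃ m, m < n ∧ s m = CC m := by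
      by_contra hno
      push_neg at hno
      have hall : ∀ i, i < n → s i = SP i ∧ i+1 < n := by
        intro i
        induction i with
        | zero =>
          intro h0
          rcases hA 0 h0 with h | ⟨j, hj, _, _⟩ | ⟨hh1, hh2⟩
          · exact absurd h (hno 0 h0)
          · omega
          · exact ⟨hh2, hh1⟩
        | succ i ih =>
          intro hi1
          obtain ⟨hspi, hlt⟩ := ih (by omega)
          have hnsm : ¬ (s (i+1) = SM (i+1)) := by
            rw [hB i hlt]
            exact not_not_intro hspi
          rcases hA (i+1) hi1 with h | ⟨j, hj, hjn, hsm1⟩ | ⟨hh1, hh2⟩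
          · exact absurd h (hno (i+1) hi1)
          · have hji : j = i := by omega
            subst hji
            exact absurd hsm1 hnsm
          · exact ⟨hh2, hh1⟩
      exact absurd (hall (n-1) (by omega)).2 (by omega)
    obtain ⟨m, hm, hsmCC⟩ := hD
    have hE : ∀ j, m ≤ j → j+1 < n → s (j+1) = SM (j+1) := by
      intro j hjm
      induction j, hjm using Nat.le_induction with
      | base =>
        intro hh1
        refine (hB m hh1).mpr ?_
        intro h
        rw [hsmCC] at h
        exact hCCneSP m m hm hh1 h
      | succ j hj ih =>
        intro hnn
        refine (hB (j+1) hnn).mpr ?_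
        intro h
        rw [ih (by omega)] at h
        exact hSPneSM (j+1) j hnn (by omega) h.symm
    have hF : ∀ i, i < m → s i = SP i := by
      have key : ∀ jd, ∀ i, i < m → m - i = jd + 1 → s i = SP i := by
        intro jd
        induction jd with
        | zero =>
          intro i him hji
          have hi1 : i + 1 = m := by omega
          have hnsm : ¬ (s (i+1) = SM (i+1)) := by
            intro h
            have hz2 : CC m = SM (i+1) := by
              rw [← hsmCC, ← hi1]
              exact h
            exact hCCneSM m i hm (by omega) hz2
          by_contra hc2
          exact hnsm ((hB i (by omega)).mpr hc2)
        | succ jd ih =>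
          intro i him hji
          have hnext : s (i+1) = SP (i+1) := ih (i+1) (by omega) (by omega)
          have hnsm : ¬ (s (i+1) = SM (i+1)) := by
            intro h
            rw [hnext] at h
            exact hSPneSM (i+1) i (by omega) (by omega) h
          by_contra hc2
          exact hnsm ((hB i (by omega)).mpr hc2)
      intro i him
      exact key (m - i - 1) i him (by omega)
    refine ⟨m, hm, ?_⟩
    have hfs : ∀ i, i < n → f m i = s i := by
      intro i hi
      rcases lt_trichotomy i m with h | rfl | h
      · rw [hfdef, if_pos h, hF i h]
      · rw [hfdef, if_neg (lt_irrefl _), if_pos rfl, hsmCC]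
      · obtain ⟨j, rfl⟩ : ∃ j, i = j+1 := ⟨i-1, by omega⟩
        rw [hfdef, if_neg (by omega), if_neg (by omega), hE j (by omega) hi]
    apply Finset.ext
    intro σ
    constructor
    · intro hσ
      have hex : ∃ i, i < n ∧ a (2*i) ∈ σ := by
        rcases hcls σ hσ with ⟨i, hi, rfl⟩ | ⟨i, hi, rfl | rfl⟩
        · exact ⟨i, hi, by rw [hCCdef]; simp⟩
        · exact ⟨i, by omega, by rw [hSPdef]; simp⟩
        · exact ⟨i+1, hi, by rw [show 2*(i+1) = 2*i+2 by ring, hSMsucc]; simp⟩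
      obtain ⟨i, hi, hmemi⟩ := hex
      have hσs : σ = s i := hsu i hi σ hσ hmemi
      rw [hQmdef]
      exact Finset.mem_image.mpr ⟨i, Finset.mem_range.mpr hi, by rw [hfs i hi, hσs]⟩
    · intro hσ
      rw [hQmdef] at hσ
      obtain ⟨i, hi, rfl⟩ := Finset.mem_image.mp hσ
      rw [Finset.mem_range] at hi
      rw [hfs i hi]
      exact hsQ i hi
  -- injectivity of Qm
  have hfinjOn : ∀ m', m' < n → ∀ i, i < n → ∀ i', i' < n → f m' i = f m' i' → i = i' := by
    intro m' hm' i hi i' hi' h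
    exact hidx i hi i' hi' m' hm' (a (2*i)) (Or.inl rfl) (h ▸ (hmemaf m' i hm' hi).1)
  have hQminj : ∀ m1, m1 < n → ∀ m2, m2 < n → Qm m1 = Qm m2 → m1 = m2 := by
    intro m1 hm1 m2 hm2 h
    by_contra hne'
    have hCCin : CC m1 ∈ Qm m2 := by
      rw [← h, hQmdef]
      refine Finset.mem_image.mpr ⟨m1, Finset.mem_range.mpr hm1, ?_⟩
      rw [hfdef, if_neg (lt_irrefl _), if_pos rfl]
    rw [hQmdef] at hCCin
    obtain ⟨i, hi, hfi⟩ := Finset.mem_image.mp hCCin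
    rw [Finset.mem_range] at hi
    have hieq : m1 = i := hidx m1 hm1 i hi m2 hm2 (a (2*m1)) (Or.inl rfl)
      (by rw [hfi, hCCdef]; simp)
    subst hieq
    rcases lt_trichotomy m1 m2 with h1 | h1 | h1
    · rw [hfdef, if_pos h1] at hfi
      exact absurd hfi.symm (hCCneSP m1 m1 hm1 (by omega))
    · exact hne' h1
    · rw [hfdef, if_neg (by omega), if_neg (by omega)] at hfi
      obtain ⟨j, rfl⟩ : ∃ j, m1 = j+1 := ⟨m1-1, by omega⟩
      exact absurd hfi.symm (hCCneSM (j+1) j hm1 (by omega))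
  constructor
  · -- the count
    have hset : {Q : Finset (Finset A) | D.CoversExactly D.IsTreeNode D.IsRetic
        {e : A | e ∈ l ∨ ∃ x ∈ l, D.IsRetic (D.head x) ∧ D.tail e = D.head x} Q}
        = ↑((Finset.range n).image Qm) := by
      ext Q
      simp only [Set.mem_setOf_eq, Finset.coe_image, Set.mem_image, Finset.mem_coe,
        Finset.mem_range]
      constructor
      · intro h
        obtain ⟨m, hm, rfl⟩ := huniqQ Q h
        exact ⟨m, hm, rfl⟩
      · rintro ⟨m, hm, rfl⟩
        exact hcover m hm
    rw [hset, Set.ncard_coe_finset, Finset.card_image_of_injOn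
      (fun m1 h1 m2 h2 h => hQminj m1 (by simpa using h1) m2 (by simpa using h2) h),
      Finset.card_range]
    omega
  · -- the structure of each cover
    intro Q hQ
    obtain ⟨m, hm, rfl⟩ := huniqQ Q hQ
    have hCCmem : CC m ∈ Qm m := by
      rw [hQmdef]
      exact Finset.mem_image.mpr ⟨m, Finset.mem_range.mpr hm,
        by rw [hfdef, if_neg (lt_irrefl _), if_pos rfl]⟩
    refine ⟨⟨2*m, a (2*m), a (2*m+1), hget _ (by omega), hget _ (by omega), ?_, ?_⟩, ?_, ?_⟩
    · rw [← hCCdef m]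
      exact hCCmem
    · rw [← hCCdef m]
      exact hCCch m hm
    · have hseteq : {s : Finset A | s ∈ Qm m ∧ D.IsCherryShape s} = {CC m} := by
        apply Set.eq_singleton_iff_unique_mem.mpr
        refine ⟨⟨hCCmem, hCCch m hm⟩, ?_⟩
        rintro σ ⟨hσ, hch⟩
        rw [hQmdef] at hσ
        obtain ⟨i, hi, rfl⟩ := Finset.mem_image.mp hσ
        rw [Finset.mem_range] at hi
        rcases lt_trichotomy i m with h | rfl | h
        · have hcard := hchcard _ hch
          rw [hfdef, if_pos h, hSPcard i (by omega)] at hcard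
          exact absurd hcard (by omega)
        · rw [hfdef, if_neg (lt_irrefl _), if_pos rfl]
        · obtain ⟨j, rfl⟩ : ∃ j, i = j+1 := ⟨i-1, by omega⟩
          have hcard := hchcard _ hch
          rw [hfdef, if_neg (by omega), if_neg (by omega), hSMcard j (by omega)] at hcard
          exact absurd hcard (by omega)
      rw [hseteq, Set.ncard_singleton]
    · have hseteq : {s : Finset A | s ∈ Qm m ∧ D.IsRCShape D.IsTreeNode D.IsRetic s}
          = ↑(((Finset.range n).erase m).image (f m)) := by
        ext σ
        simp only [Set.mem_setOf_eq, Finset.coe_image, Set.mem_image, Finset.mem_coe,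
          Finset.mem_erase, Finset.mem_range]
        constructor
        · rintro ⟨hσ, hrc⟩
          rw [hQmdef] at hσ
          obtain ⟨i, hi, rfl⟩ := Finset.mem_image.mp hσ
          rw [Finset.mem_range] at hi
          refine ⟨i, ⟨?_, hi⟩, rfl⟩
          rintro rfl
          have hcard := hrccard _ hrc
          rw [hfdef, if_neg (lt_irrefl _), if_pos rfl, hCCcard i hi] at hcard
          exact absurd hcard (by omega)
        · rintro ⟨i, ⟨hne2, hi⟩, rfl⟩
          constructor
          · rw [hQmdef]
            exact Finset.mem_image.mpr ⟨i, Finset.mem_range.mpr hi, rfl⟩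
          · rcases lt_trichotomy i m with h | h | h
            · rw [hfdef, if_pos h]
              exact hSPrc i (by omega)
            · exact absurd h hne2
            · obtain ⟨j, rfl⟩ : ∃ j, i = j+1 := ⟨i-1, by omega⟩
              rw [hfdef, if_neg (by omega), if_neg (by omega)]
              exact hSMrc j (by omega)
      have hinjOn : Set.InjOn (f m) ↑((Finset.range n).erase m) := by
        intro i1 h1 i2 h2 hh
        have h1' := Finset.mem_erase.mp (Finset.mem_coe.mp h1)
        have h2' := Finset.mem_erase.mp (Finset.mem_coe.mp h2)
        exact hfinjOn m hm i1 (Finset.mem_range.mp h1'.2) i2 (Finset.mem_range.mp h2'.2) hh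
      rw [hseteq, Set.ncard_coe_finset, Finset.card_image_of_injOn hinjOn,
        Finset.card_erase_of_mem (Finset.mem_range.mpr hm), Finset.card_range]
      omega
end
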